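/- arXiv:math/9610210 — 2 statements merged into one kernel-verified Lean document; each statement's English description precedes it below -/
import Mathlib

section
/- Let X be a separable left-dominant or right-dominant sequence space with canonical basis (e_n), and let (u_n) be a normalized sequence of pairwise disjointly supported vectors in X whose closed linear span is the range of a bounded projection on X. Then (u_n) is permutatively equivalent to a subsequence (e_{k_n}) of the canonical basis of X. -/
open Function Filter
open scoped BigOperators ENNReal

noncomputable section

namespace CK

/-- The formal (finite-support) linear combination `∑ᶠ i, a i • e i`. -/
def vecSum {X : Type*} [NormedAddCommGroup X] [NormedSpace ℝ X] (e : ℕ → X) (a : ℕ → ℝ) : X :=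
  ∑ᶠ i, a i • e i

/-- `u` is an unconditional basis of `X`: every vector has a unique unconditional
(i.e. unordered, in the sense of `HasSum`) expansion along `u`. -/
def IsUnconditionalBasis {ι : Type*} {X : Type*} [NormedAddCommGroup X] [NormedSpace ℝ X]
    (u : ι → X) : Prop :=
  ∀ x : X, ∃! a : ι → ℝ, HasSum (fun i => a i • u i) x

/-- Two systems of vectors are equivalent: the formal identity between finite linear
combinations is bounded both ways (hence extends to an isomorphism of closed spans). -/
def BasisEquiv {ι : Type*} {X Y : Type*} [NormedAddCommGroup X] [NormedSpace ℝ X]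
    [NormedAddCommGroup Y] [NormedSpace ℝ Y] (u : ι → X) (v : ι → Y) : Prop :=
  ∃ c C : ℝ, 0 < c ∧ ∀ (a : ι → ℝ) (s : Finset ι),
    c * ‖∑ i ∈ s, a i • u i‖ ≤ ‖∑ i ∈ s, a i • v i‖ ∧
      ‖∑ i ∈ s, a i • v i‖ ≤ C * ‖∑ i ∈ s, a i • u i‖

/-- Permutative equivalence of two systems of vectors. -/
def PermutativelyEquiv {ι : Type*} {X Y : Type*} [NormedAddCommGroup X] [NormedSpace ℝ X]
    [NormedAddCommGroup Y] [NormedSpace ℝ Y] (u : ι → X) (v : ι → Y) : Prop :=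
  ∃ π : Equiv.Perm ι, BasisEquiv u (fun i => v (π i))

/-- `X` has a unique unconditional basis: any two normalized unconditional bases are
permutatively equivalent. -/
def HasUniqueUnconditionalBasis (X : Type*) [NormedAddCommGroup X] [NormedSpace ℝ X] : Prop :=
  ∀ u v : ℕ → X, IsUnconditionalBasis u → IsUnconditionalBasis v →
    (∀ n, ‖u n‖ = 1) → (∀ n, ‖v n‖ = 1) → PermutativelyEquiv u v

/-- The closed linear span of a sequence. -/
def spanCl {X : Type*} [NormedAddCommGroup X] [NormedSpace ℝ X] (u : ℕ → X) : Submodule ℝ X :=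
  (Submodule.span ℝ (Set.range u)).topologicalClosure

/-- The members of a sequence, as elements of their closed linear span. -/
def inSpanCl {X : Type*} [NormedAddCommGroup X] [NormedSpace ℝ X] (u : ℕ → X) (n : ℕ) :
    ↥(spanCl u) :=
  ⟨u n, (Submodule.span ℝ (Set.range u)).le_topologicalClosure (Submodule.subset_span ⟨n, rfl⟩)⟩

/-- `u` is an unconditional basic sequence: it is an unconditional basis of its closed span. -/
def IsUncondBasicSeq {X : Type*} [NormedAddCommGroup X] [NormedSpace ℝ X] (u : ℕ → X) : Prop :=
  IsUnconditionalBasis (inSpanCl u)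

/-- The closed span of `u` is the range of a bounded linear projection. -/
def IsComplementedSeq {X : Type*} [NormedAddCommGroup X] [NormedSpace ℝ X] (u : ℕ → X) : Prop :=
  ∃ P : X →L[ℝ] X, P.comp P = P ∧ LinearMap.range (P : X →ₗ[ℝ] X) = spanCl u

/-- A finite linear combination of the `f j`, as an element of the closed span. -/
def spanElt {X : Type*} [NormedAddCommGroup X] [NormedSpace ℝ X] (f : ℕ → X) (a : ℕ → ℝ)
    (s : Finset ℕ) : ↥(spanCl f) :=
  ⟨∑ j ∈ s, a j • f j, by
    apply (Submodule.span ℝ (Set.range f)).le_topologicalClosure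
    exact Submodule.sum_mem _ fun j _ => Submodule.smul_mem _ _ (Submodule.subset_span ⟨j, rfl⟩)⟩

/-- The lattice (in the coordinatewise order induced by the basic sequence `f`) given by the
closed span of `f` is sufficiently lattice Euclidean: uniformly complemented lattice copies of
`ℓ₂ⁿ`, the projections being realized by operators `S, T` with `S ∘ T = id`, `‖S‖‖T‖ ≤ M` and
`S` a lattice homomorphism (expressed coordinatewise on finite combinations of the `f j`). -/
def SuffLatticeEuclideanSeq {X : Type*} [NormedAddCommGroup X] [NormedSpace ℝ X]
    (f : ℕ → X) : Prop :=
  ∃ M : ℝ, ∀ n : ℕ, ∃ (S : ↥(spanCl f) →L[ℝ] EuclideanSpace ℝ (Fin n))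
    (T : EuclideanSpace ℝ (Fin n) →L[ℝ] ↥(spanCl f)),
    (∀ v, S (T v) = v) ∧ ‖S‖ * ‖T‖ ≤ M ∧
    ∀ (a b : ℕ → ℝ) (s : Finset ℕ) (i : Fin n),
      S (spanElt f (fun j => max (a j) (b j)) s) i =
        max (S (spanElt f a s) i) (S (spanElt f b s) i)

/-- The canonical basis of the square `Z ⊕ Z`:
`(u 0, 0), (0, u 0), (u 1, 0), (0, u 1), …`. -/
def squareBasis {X : Type*} [NormedAddCommGroup X] [NormedSpace ℝ X] (u : ℕ → X) : ℕ → X × X :=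
  fun k => if Even k then (u (k / 2), 0) else (0, u (k / 2))

/-- The system `e` is left-dominant with constant `γ`. -/
def LeftDominantWith {X : Type*} [NormedAddCommGroup X] [NormedSpace ℝ X]
    (e : ℕ → X) (γ : ℝ) : Prop :=
  ∀ (n : ℕ) (u v : Fin n → ℕ → ℝ),
    (∀ k, (Function.support (u k)).Finite) → (∀ k, (Function.support (v k)).Finite) →
    (Pairwise fun k l => Disjoint (Function.support (u k)) (Function.support (u l))) →
    (Pairwise fun k l => Disjoint (Function.support (v k)) (Function.support (v l))) →
    (∀ k, ∀ i ∈ Function.support (u k), ∀ j ∈ Function.support (v k), i < j) →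
    (∀ k, ‖vecSum e (v k)‖ ≤ ‖vecSum e (u k)‖) →
    ‖vecSum e (fun i => ∑ k, v k i)‖ ≤ γ * ‖vecSum e (fun i => ∑ k, u k i)‖

/-- The system `e` is right-dominant with constant `γ`. -/
def RightDominantWith {X : Type*} [NormedAddCommGroup X] [NormedSpace ℝ X]
    (e : ℕ → X) (γ : ℝ) : Prop :=
  ∀ (n : ℕ) (u v : Fin n → ℕ → ℝ),
    (∀ k, (Function.support (u k)).Finite) → (∀ k, (Function.support (v k)).Finite) →
    (Pairwise fun k l => Disjoint (Function.support (u k)) (Function.support (u l))) →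
    (Pairwise fun k l => Disjoint (Function.support (v k)) (Function.support (v l))) →
    (∀ k, ∀ i ∈ Function.support (u k), ∀ j ∈ Function.support (v k), i < j) →
    (∀ k, ‖vecSum e (u k)‖ ≤ ‖vecSum e (v k)‖) →
    ‖vecSum e (fun i => ∑ k, u k i)‖ ≤ γ * ‖vecSum e (fun i => ∑ k, v k i)‖

def IsLeftDominant {X : Type*} [NormedAddCommGroup X] [NormedSpace ℝ X] (e : ℕ → X) : Prop :=
  ∃ γ : ℝ, 1 ≤ γ ∧ LeftDominantWith e γ

def IsRightDominant {X : Type*} [NormedAddCommGroup X] [NormedSpace ℝ X] (e : ℕ → X) : Prop :=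
  ∃ γ : ℝ, 1 ≤ γ ∧ RightDominantWith e γ

/-- The norm of the unit vector basis of `ℓ_p^n` (`p = ∞` giving the sup norm). -/
def lpNormFin (p : ℝ≥0∞) {n : ℕ} (c : Fin n → ℝ) : ℝ :=
  if p = ⊤ then ⨆ k, |c k| else (∑ k, |c k| ^ p.toReal) ^ (1 / p.toReal)

/-- `ℓ_p` is disjointly finitely representable in the sequence space spanned by `e`. -/
def DisjointlyFinitelyRepresentable (p : ℝ≥0∞) {X : Type*} [NormedAddCommGroup X]
    [NormedSpace ℝ X] (e : ℕ → X) : Prop :=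
  ∀ (n : ℕ) (ε : ℝ), 0 < ε → ∃ a : Fin n → ℕ → ℝ,
    (∀ k, (Function.support (a k)).Finite) ∧
    (Pairwise fun k l => Disjoint (Function.support (a k)) (Function.support (a l))) ∧
    ∀ c : Fin n → ℝ,
      (1 + ε)⁻¹ * lpNormFin p c ≤ ‖vecSum e fun i => ∑ k, c k * a k i‖ ∧
      ‖vecSum e fun i => ∑ k, c k * a k i‖ ≤ (1 + ε) * lpNormFin p c

/-- `X` is sufficiently Euclidean: `ℓ₂ⁿ`'s are uniformly complementably representable in `X`. -/
def SufficientlyEuclidean (X : Type*) [NormedAddCommGroup X] [NormedSpace ℝ X] : Prop :=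
  ∃ M : ℝ, ∀ n : ℕ, ∃ (S : X →L[ℝ] EuclideanSpace ℝ (Fin n))
    (T : EuclideanSpace ℝ (Fin n) →L[ℝ] X), (∀ v, S (T v) = v) ∧ ‖S‖ * ‖T‖ ≤ M

/-- Left dominance for an extended-real-valued Köthe norm on sequences. -/
def ENormLeftDominant (N : (ℕ → ℝ) → ℝ≥0∞) (γ : ℝ) : Prop :=
  ∀ (n : ℕ) (u v : Fin n → ℕ → ℝ),
    (∀ k, (Function.support (u k)).Finite) → (∀ k, (Function.support (v k)).Finite) →
    (Pairwise fun k l => Disjoint (Function.support (u k)) (Function.support (u l))) →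
    (Pairwise fun k l => Disjoint (Function.support (v k)) (Function.support (v l))) →
    (∀ k, ∀ i ∈ Function.support (u k), ∀ j ∈ Function.support (v k), i < j) →
    (∀ k, N (v k) ≤ N (u k)) →
    N (fun i => ∑ k, v k i) ≤ ENNReal.ofReal γ * N (fun i => ∑ k, u k i)

/-- Right dominance for an extended-real-valued Köthe norm on sequences. -/
def ENormRightDominant (N : (ℕ → ℝ) → ℝ≥0∞) (γ : ℝ) : Prop :=
  ∀ (n : ℕ) (u v : Fin n → ℕ → ℝ),
    (∀ k, (Function.support (u k)).Finite) → (∀ k, (Function.support (v k)).Finite) →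
    (Pairwise fun k l => Disjoint (Function.support (u k)) (Function.support (u l))) →
    (Pairwise fun k l => Disjoint (Function.support (v k)) (Function.support (v l))) →
    (∀ k, ∀ i ∈ Function.support (u k), ∀ j ∈ Function.support (v k), i < j) →
    (∀ k, N (u k) ≤ N (v k)) →
    N (fun i => ∑ k, u k i) ≤ ENNReal.ofReal γ * N (fun i => ∑ k, v k i)

/-- The Köthe dual norm: `‖f‖_{X*} = sup { Σ |f n g n| : ‖g‖_X ≤ 1 }`. -/
def kotheDual (N : (ℕ → ℝ) → ℝ≥0∞) : (ℕ → ℝ) → ℝ≥0∞ :=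
  fun f => ⨆ g : {g : ℕ → ℝ // N g ≤ 1}, ∑' n, ENNReal.ofReal |f n * (g : ℕ → ℝ) n|

/-- The Nakano norm of a finitely supported sequence. -/
def nakanoNormFin (p : ℕ → ℝ) (s : Finset ℕ) (a : ℕ → ℝ) : ℝ :=
  sInf {lam : ℝ | 0 < lam ∧ ∑ i ∈ s, (|a i| / lam) ^ (p i) ≤ 1}

/-- The Orlicz (Luxemburg) norm of a finitely supported sequence. -/
def orliczNormFin (F : ℝ → ℝ) (s : Finset ℕ) (a : ℕ → ℝ) : ℝ :=
  sInf {lam : ℝ | 0 < lam ∧ ∑ i ∈ s, F (|a i| / lam) ≤ 1}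

/-- The Orlicz function `F(t) ∼ t |log t|^{-a}`:
`F(t) = t^{1+a}` for `e⁻¹ ≤ t ≤ 1` and `F(t) = e^{-a} t |log t|^{-a}` for `0 < t ≤ e⁻¹`. -/
def Fone (a : ℝ) : ℝ → ℝ := fun t =>
  if t ≤ Real.exp (-1) then Real.exp (-a) * t * |Real.log t| ^ (-a) else t ^ (1 + a)

/-- The Orlicz function `F(t) ∼ t² |log t|⁻¹`:
`F(t) = t³` for `e⁻¹ ≤ t ≤ 1` and `F(t) = e⁻² t² |log t|⁻¹` for `0 < t ≤ e⁻¹`. -/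
def Ftwo : ℝ → ℝ := fun t =>
  if t ≤ Real.exp (-1) then Real.exp (-2) * t ^ (2 : ℕ) * |Real.log t|⁻¹ else t ^ (3 : ℕ)

/-- A norm on `c₀₀ = ℕ →₀ ℝ` satisfying the defining inequalities of the Tsirelson norm. -/
def IsTsiCandidate (N : (ℕ →₀ ℝ) → ℝ) : Prop :=
  (∀ x, 0 ≤ N x) ∧ (∀ (c : ℝ) (x), N (c • x) = |c| * N x) ∧
  (∀ x y, N (x + y) ≤ N x + N y) ∧
  (∀ x, ∀ i : ℕ, |x i| ≤ N x) ∧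
  (∀ (n : ℕ) (xs : Fin n → (ℕ →₀ ℝ)),
    (∀ j k : Fin n, j < k → ∀ i ∈ (xs j).support, ∀ i' ∈ (xs k).support, i < i') →
    (∀ j : Fin n, ∀ i ∈ (xs j).support, n ≤ i) →
    (1 / 2 : ℝ) * ∑ j, N (xs j) ≤ N (∑ j, xs j))

/-- The Tsirelson norm: the minimal norm on `c₀₀` dominating the sup norm and satisfying
`(1/2) Σ ‖x_j‖ ≤ ‖Σ x_j‖` for successive vectors `n ≤ supp x₁ < ⋯ < supp x_n`. -/
def IsTsirelsonNorm (N : (ℕ →₀ ℝ) → ℝ) : Prop :=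
  IsTsiCandidate N ∧ ∀ N', IsTsiCandidate N' → ∀ x, N x ≤ N' x

/-- A norm on `c₀₀` satisfying the defining inequalities of the disjoint-version Tsirelson
norm `‖·‖_T^#`. -/
def IsTsiSharpCandidate (N : (ℕ →₀ ℝ) → ℝ) : Prop :=
  (∀ x, 0 ≤ N x) ∧ (∀ (c : ℝ) (x), N (c • x) = |c| * N x) ∧
  (∀ x y, N (x + y) ≤ N x + N y) ∧
  (∀ x, ∀ i : ℕ, |x i| ≤ N x) ∧
  (∀ (n : ℕ) (xs : Fin (2 * n) → (ℕ →₀ ℝ)),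
    (Pairwise fun j k => Disjoint (xs j).support (xs k).support) →
    (∀ j, ∀ i ∈ (xs j).support, n ≤ i) →
    (1 / 2 : ℝ) * ∑ j, N (xs j) ≤ N (∑ j, xs j))

/-- The norm `‖·‖_T^#`: the least norm on `c₀₀` dominating the sup norm and satisfying
`(1/2) Σ_{j=1}^{2n} ‖x_j‖ ≤ ‖Σ x_j‖` for `2n` disjointly supported vectors with
`min supp x_j ≥ n`. -/
def IsTsirelsonSharpNorm (N : (ℕ →₀ ℝ) → ℝ) : Prop :=
  IsTsiSharpCandidate N ∧ ∀ N', IsTsiSharpCandidate N' → ∀ x, N x ≤ N' x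

open scoped Classical in
/-- `V(A)`: the set of `j` such that for some `i ∈ A` and some `k`, `(i,k) ∈ G` and
`(j,k) ∈ G`. -/
def Vstep (n : ℕ) (G : Finset (Fin n × Fin n)) (A : Finset (Fin n)) : Finset (Fin n) :=
  Finset.univ.filter fun j => ∃ i ∈ A, ∃ k, (i, k) ∈ G ∧ (j, k) ∈ G

open scoped Classical in
/-- `G^r`: the set of pairs `(i,j)` such that `(k,j) ∈ G` for some `k ∈ V^r({i})`. -/
def Gpow (n : ℕ) (G : Finset (Fin n × Fin n)) (r : ℕ) : Finset (Fin n × Fin n) :=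
  Finset.univ.filter fun p => ∃ k, (k, p.2) ∈ G ∧ k ∈ (Vstep n G)^[r] {p.1}

/-- A family of finite-dimensional sequence spaces (given by normalized monotone bases `b i`)
is sufficiently lattice Euclidean. -/
def SuffLatticeEuclideanFam {ι : Type*} {E : ι → Type*} [∀ i, NormedAddCommGroup (E i)]
    [∀ i, NormedSpace ℝ (E i)] {n : ι → ℕ} (b : ∀ i, Fin (n i) → E i) : Prop :=
  ∃ M : ℝ, ∀ m : ℕ, ∃ i : ι, ∃ (S : E i →L[ℝ] EuclideanSpace ℝ (Fin m))
    (T : EuclideanSpace ℝ (Fin m) →L[ℝ] E i),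
    (∀ v, S (T v) = v) ∧ ‖S‖ * ‖T‖ ≤ M ∧
    ∀ (a c : Fin (n i) → ℝ) (k : Fin m),
      S (∑ j, max (a j) (c j) • b i j) k =
        max (S (∑ j, a j • b i j) k) (S (∑ j, c j • b i j) k)

end CK

/-!
Write `u n = ∑ i, a n i • e i` and let `u*ₙ` (`blockCoord`) be the coefficient functionals of the
disjoint sequence `u`. Since `P` fixes `u n`, `1 = u*ₙ (P (u n)) = ∑ i, a n i u*ₙ (P (e i))`.
Either one term of this series has size at least `1/4`, and then `e` at that index is
comparable with `u n`; or some index `κ n` in the support of `u n` splits it into a part `N n`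
before `κ n` and a part `F n` after it, each of which (after adjusting signs) contributes more
than `1/4` to the series. Dominance compares `e (κ n)` with `N n`, and `F n` with `e (κ n)` (or
the reverse), while averaging over signs bounds `‖∑ cₙ u*ₙ (P (v n)) • u n‖` by
`‖P‖ ‖∑ cₙ • v n‖` for disjoint `v`. This makes `u` equivalent to `e ∘ κ`, and the injective
`κ` can be reordered increasingly.
-/

namespace CK

open Function Topology

section

variable {X : Type*} [NormedAddCommGroup X] [NormedSpace ℝ X] {e : ℕ → X}

def HasLatticeNorm (e : ℕ → X) : Prop :=
  ∀ a b : ℕ → ℝ, (support a).Finite → (support b).Finite →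
    (∀ i, |a i| ≤ |b i|) → ‖vecSum e a‖ ≤ ‖vecSum e b‖

structure IsSequenceSpaceBasis (e : ℕ → X) : Prop where
  isUnconditionalBasis : IsUnconditionalBasis e
  norm_eq_one : ∀ j, ‖e j‖ = 1
  hasLatticeNorm : HasLatticeNorm e

lemma vecSum_eq_sum (e : ℕ → X) {c : ℕ → ℝ} {F : Finset ℕ} (h : support c ⊆ F) :
    vecSum e c = ∑ i ∈ F, c i • e i :=
  finsum_eq_sum_of_support_subset _ ((support_smul_subset_left c e).trans h)

lemma vecSum_indicator (e : ℕ → X) (F : Finset ℕ) (w : ℕ → ℝ) :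
    vecSum e ((F : Set ℕ).indicator w) = ∑ i ∈ F, w i • e i := by
  rw [vecSum_eq_sum e Set.support_indicator_subset]
  exact Finset.sum_congr rfl fun i hi => by rw [Set.indicator_of_mem (by exact hi)]

lemma hasSum_single_smul (e : ℕ → X) (k : ℕ) (c : ℝ) :
    HasSum (fun i => (Pi.single k c : ℕ → ℝ) i • e i) (c • e k) := by
  convert hasSum_single (f := fun i => (Pi.single k c : ℕ → ℝ) i • e i) k
    fun i hi => by simp [hi]
  simp

lemma hasSum_indicator_smul (e : ℕ → X) (F : Finset ℕ) (w : ℕ → ℝ) :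
    HasSum (fun i => (F : Set ℕ).indicator w i • e i) (∑ i ∈ F, w i • e i) := by
  have h := hasSum_sum_of_ne_finset_zero (L := SummationFilter.unconditional ℕ) (s := F)
    (f := fun i => (F : Set ℕ).indicator w i • e i) fun i hi => by
      simp [Set.indicator_of_notMem (show i ∉ (F : Set ℕ) from hi)]
  rwa [Finset.sum_congr rfl fun i hi => by rw [Set.indicator_of_mem (by exact hi)]] at h

namespace HasLatticeNorm

lemma norm_sum_le (hlat : HasLatticeNorm e) (F : Finset ℕ) {b c : ℕ → ℝ}
    (h : ∀ i, |b i| ≤ |c i|) : ‖∑ i ∈ F, b i • e i‖ ≤ ‖∑ i ∈ F, c i • e i‖ := by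
  rw [← vecSum_indicator, ← vecSum_indicator]
  refine hlat _ _ (F.finite_toSet.subset Set.support_indicator_subset)
    (F.finite_toSet.subset Set.support_indicator_subset) fun i => ?_
  by_cases hi : i ∈ (F : Set ℕ) <;> simp [hi, h i]

lemma norm_le_of_hasSum (hlat : HasLatticeNorm e) {b c : ℕ → ℝ} {y x : X}
    (hy : HasSum (fun i => b i • e i) y) (hx : HasSum (fun i => c i • e i) x)
    (h : ∀ i, |b i| ≤ |c i|) : ‖y‖ ≤ ‖x‖ :=
  le_of_tendsto_of_tendsto' hy.norm hx.norm fun F => hlat.norm_sum_le F h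

lemma norm_sum_le_of_hasSum (hlat : HasLatticeNorm e) (F : Finset ℕ) {w : ℕ → ℝ} {x : X}
    (hx : HasSum (fun i => w i • e i) x) : ‖∑ i ∈ F, w i • e i‖ ≤ ‖x‖ :=
  hlat.norm_le_of_hasSum (hasSum_indicator_smul e F w) hx fun i => by
    by_cases hi : i ∈ (F : Set ℕ) <;> simp [hi]

lemma abs_le_norm_of_hasSum (hlat : HasLatticeNorm e) {i : ℕ} (hi : ‖e i‖ = 1) {w : ℕ → ℝ}
    {x : X} (hx : HasSum (fun i => w i • e i) x) : |w i| ≤ ‖x‖ := by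
  have := hlat.norm_le_of_hasSum (hasSum_single_smul e i (w i)) hx fun j => by
    by_cases hj : j = i <;> simp [hj]
  rwa [norm_smul, hi, mul_one, Real.norm_eq_abs] at this

lemma summable_of_abs_le [CompleteSpace X] (hlat : HasLatticeNorm e) {b c : ℕ → ℝ} {x : X}
    (hx : HasSum (fun i => c i • e i) x) (h : ∀ i, |b i| ≤ |c i|) :
    Summable fun i => b i • e i := by
  rw [summable_iff_vanishing_norm]
  intro ε hε
  obtain ⟨s, hs⟩ := summable_iff_vanishing_norm.mp hx.summable ε hε
  exact ⟨s, fun t ht => (hlat.norm_sum_le t h).trans_lt (hs t ht)⟩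

end HasLatticeNorm

namespace IsSequenceSpaceBasis

variable (he : IsSequenceSpaceBasis e)

def coeff (x : X) : ℕ → ℝ := (he.isUnconditionalBasis x).choose

lemma hasSum_coeff (x : X) : HasSum (fun i => he.coeff x i • e i) x :=
  (he.isUnconditionalBasis x).choose_spec.1

lemma coeff_eq {w : ℕ → ℝ} {x : X} (hx : HasSum (fun i => w i • e i) x) : he.coeff x = w :=
  ((he.isUnconditionalBasis x).choose_spec.2 w hx).symm

def coord (i : ℕ) : X →L[ℝ] ℝ :=
  LinearMap.mkContinuous
    { toFun := fun x => he.coeff x i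
      map_add' := fun x y => by
        have := (he.hasSum_coeff x).add (he.hasSum_coeff y)
        simp only [← add_smul] at this
        exact congrFun (he.coeff_eq this) i
      map_smul' := fun c x => by
        have := (he.hasSum_coeff x).const_smul c
        simp only [smul_smul] at this
        exact congrFun (he.coeff_eq this) i }
    1 fun x => by
      simpa using he.hasLatticeNorm.abs_le_norm_of_hasSum (he.norm_eq_one i) (he.hasSum_coeff x)

lemma coord_eq {w : ℕ → ℝ} {x : X} (hx : HasSum (fun i => w i • e i) x) (i : ℕ) :
    he.coord i x = w i :=
  congrFun (he.coeff_eq hx) i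

end IsSequenceSpaceBasis

structure IsDisjointlySupported (e : ℕ → X) (a : ℕ → ℕ → ℝ) (u : ℕ → X) : Prop where
  hasSum : ∀ n, HasSum (fun i => a n i • e i) (u n)
  disjoint : Pairwise (Disjoint on fun n => support (a n))

lemma abs_sum_le_abs_sum_of_disjoint {ι : Type*} {t : Finset ι} {w w' : ι → ℕ → ℝ}
    (hdisj : (t : Set ι).PairwiseDisjoint fun n => support (w n))
    (hdom : ∀ n ∈ t, ∀ i, |w' n i| ≤ |w n i|) (i : ℕ) :
    |∑ n ∈ t, w' n i| ≤ |∑ n ∈ t, w n i| := by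
  have hzero : ∀ n ∈ t, w n i = 0 → w' n i = 0 := fun n hn h =>
    abs_nonpos_iff.mp (by simpa [h] using hdom n hn i)
  by_cases hex : ∃ n ∈ t, w n i ≠ 0
  · obtain ⟨n₀, hn₀, hw₀⟩ := hex
    have hw : ∀ m ∈ t, m ≠ n₀ → w m i = 0 := fun m hm hne => by
      by_contra h
      exact Set.disjoint_left.mp (hdisj hm hn₀ hne) h hw₀
    rw [Finset.sum_eq_single_of_mem n₀ hn₀ hw, Finset.sum_eq_single_of_mem n₀ hn₀
      fun m hm hne => hzero m hm (hw m hm hne)]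
    exact hdom n₀ hn₀ i
  · simp only [not_exists, not_and, not_not] at hex
    rw [Finset.sum_eq_zero hex, Finset.sum_eq_zero fun n hn => hzero n hn (hex n hn)]

namespace HasLatticeNorm

lemma norm_sum_le_of_disjoint (hlat : HasLatticeNorm e) {ι : Type*} {t : Finset ι}
    {z z' : ι → X} {w w' : ι → ℕ → ℝ}
    (hz : ∀ n ∈ t, HasSum (fun i => w n i • e i) (z n))
    (hz' : ∀ n ∈ t, HasSum (fun i => w' n i • e i) (z' n))
    (hdisj : (t : Set ι).PairwiseDisjoint fun n => support (w n))
    (hdom : ∀ n ∈ t, ∀ i, |w' n i| ≤ |w n i|) :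
    ‖∑ n ∈ t, z' n‖ ≤ ‖∑ n ∈ t, z n‖ := by
  refine hlat.norm_le_of_hasSum ?_ ?_ (abs_sum_le_abs_sum_of_disjoint hdisj hdom) <;>
    simpa only [Finset.sum_smul] using hasSum_sum (by assumption)

end HasLatticeNorm

namespace IsDisjointlySupported

variable {a : ℕ → ℕ → ℝ} {u : ℕ → X}

lemma smul (hu : IsDisjointlySupported e a u) (c : ℕ → ℝ) :
    IsDisjointlySupported e (fun n i => c n * a n i) (fun n => c n • u n) where
  hasSum n := by simpa only [smul_smul] using (hu.hasSum n).const_smul (c n)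
  disjoint _ _ hnm := (hu.disjoint hnm).mono (support_mul_subset_right _ _)
    (support_mul_subset_right _ _)

lemma hasSum_sum_smul (hu : IsDisjointlySupported e a u) (t : Finset ℕ) (d : ℕ → ℝ) :
    HasSum (fun i => (∑ l ∈ t, d l * a l i) • e i) (∑ l ∈ t, d l • u l) := by
  simpa only [Finset.sum_smul] using hasSum_sum fun l _ => (hu.smul d).hasSum l

lemma norm_sum_smul_le (hu : IsDisjointlySupported e a u) (hlat : HasLatticeNorm e)
    {t : Finset ℕ} {g h : ℕ → ℝ} (hgh : ∀ n ∈ t, |g n| ≤ |h n|) :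
    ‖∑ n ∈ t, g n • u n‖ ≤ ‖∑ n ∈ t, h n • u n‖ :=
  hlat.norm_sum_le_of_disjoint (fun n _ => (hu.smul h).hasSum n) (fun n _ => (hu.smul g).hasSum n)
    (fun n _ m _ hnm => (hu.smul h).disjoint hnm) fun n hn i => by
      rw [abs_mul, abs_mul]
      exact mul_le_mul_of_nonneg_right (hgh n hn) (abs_nonneg _)

lemma norm_sum_le_of_subset (hu : IsDisjointlySupported e a u) (hlat : HasLatticeNorm e)
    {t s : Finset ℕ} (hts : t ⊆ s) (c : ℕ → ℝ) :
    ‖∑ n ∈ t, c n • u n‖ ≤ ‖∑ n ∈ s, c n • u n‖ := by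
  rw [← Finset.sum_indicator_subset _ hts]
  simp_rw [Set.indicator_smul_apply_left]
  exact hu.norm_sum_smul_le hlat fun n _ => by
    by_cases hn : n ∈ (t : Set ℕ) <;> simp [hn]

end IsDisjointlySupported

lemma isDisjointlySupported_single {κ : ℕ → ℕ} (hκ : Injective κ) :
    IsDisjointlySupported e (fun n => Pi.single (κ n) 1) (fun n => e (κ n)) where
  hasSum n := by simpa using hasSum_single_smul e (κ n) 1
  disjoint n m hnm := by
    simpa [Pi.support_single_of_ne] using hκ.ne hnm

-- The coefficient functional of `u m`, read off at some coordinate in the support of `a m`.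
def blockCoord (he : IsSequenceSpaceBasis e) (a : ℕ → ℕ → ℝ) (m : ℕ) : X →L[ℝ] ℝ :=
  let i := Classical.epsilon fun i => a m i ≠ 0
  (a m i)⁻¹ • he.coord i

section blockCoord

variable (he : IsSequenceSpaceBasis e) {a : ℕ → ℕ → ℝ} {u : ℕ → X}

lemma blockCoord_sum_smul (hu : IsDisjointlySupported e a u) {m : ℕ} (hm : a m ≠ 0)
    (t : Finset ℕ) (d : ℕ → ℝ) :
    blockCoord he a m (∑ l ∈ t, d l • u l) = if m ∈ t then d m else 0 := by
  set i := Classical.epsilon fun i => a m i ≠ 0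
  have hi : a m i ≠ 0 := Classical.epsilon_spec (not_forall.mp (mt funext hm))
  have hzero : ∀ l, l ≠ m → a l i = 0 := fun l hl =>
    not_not.mp fun h => Set.disjoint_left.mp (hu.disjoint hl) h hi
  have hcoord : he.coord i (∑ l ∈ t, d l • u l) = ∑ l ∈ t, d l * a l i :=
    he.coord_eq (hu.hasSum_sum_smul t d) i
  change (a m i)⁻¹ * he.coord i _ = _
  rw [hcoord]
  split_ifs with hmt
  · rw [Finset.sum_eq_single_of_mem m hmt fun l _ hl => by rw [hzero l hl, mul_zero]]
    field_simp
  · rw [Finset.sum_eq_zero fun l hl => by rw [hzero l (ne_of_mem_of_not_mem hl hmt), mul_zero],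
      mul_zero]

lemma blockCoord_self (hu : IsDisjointlySupported e a u) {m : ℕ} (hm : a m ≠ 0) :
    blockCoord he a m (u m) = 1 := by
  simpa using blockCoord_sum_smul he hu hm {m} 1

lemma norm_sum_blockCoord_smul_le (hu : IsDisjointlySupported e a u) (ha : ∀ m, a m ≠ 0)
    (s : Finset ℕ) {ε : ℕ → ℝ} (hε : ∀ m, |ε m| ≤ 1) {y : X} (hy : y ∈ spanCl u) :
    ‖∑ m ∈ s, (ε m * blockCoord he a m y) • u m‖ ≤ ‖y‖ := by
  classical
  have hclosed : IsClosed {y : X | ‖∑ m ∈ s, (ε m * blockCoord he a m y) • u m‖ ≤ ‖y‖} :=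
    isClosed_le (by fun_prop) continuous_norm
  have hy' : y ∈ closure (Submodule.span ℝ (Set.range u) : Set X) := by
    rwa [← Submodule.topologicalClosure_coe]
  refine closure_minimal (fun y hy => ?_) hclosed hy'
  obtain ⟨c, rfl⟩ := Finsupp.mem_span_range_iff_exists_finsupp.mp hy
  set t := s ∪ c.support
  have hy : (c.sum fun l r => r • u l) = ∑ l ∈ t, c l • u l :=
    Finsupp.sum_of_support_subset c Finset.subset_union_right _ fun _ _ => zero_smul ℝ _
  have hcoord : ∀ m ∈ s, blockCoord he a m (∑ l ∈ t, c l • u l) = c m := fun m hm => by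
    rw [blockCoord_sum_smul he hu (ha m), if_pos (Finset.mem_union_left _ hm)]
  change ‖∑ m ∈ s, (ε m * blockCoord he a m _) • u m‖ ≤ _
  rw [hy, Finset.sum_congr rfl fun m hm => by rw [hcoord m hm],
    ← Finset.sum_indicator_subset _ Finset.subset_union_left]
  calc _ = ‖∑ m ∈ t, ((s : Set ℕ).indicator ε m * c m) • u m‖ := by
        congr 1
        exact Finset.sum_congr rfl fun m _ => by
          by_cases hm : m ∈ (s : Set ℕ) <;> simp [hm]
    _ ≤ _ := hu.norm_sum_smul_le he.hasLatticeNorm fun m _ => by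
        rw [abs_mul]
        refine mul_le_of_le_one_left (abs_nonneg _) ?_
        by_cases hm : m ∈ (s : Set ℕ) <;> simp [hm, hε m]

lemma abs_blockCoord_le (hu : IsDisjointlySupported e a u) (ha : ∀ m, a m ≠ 0) {m : ℕ}
    (hum : ‖u m‖ = 1) {y : X} (hy : y ∈ spanCl u) : |blockCoord he a m y| ≤ ‖y‖ := by
  simpa [norm_smul, hum] using norm_sum_blockCoord_smul_le he hu ha {m} (ε := 1) (by simp) hy

end blockCoord

section averaging

variable {ι : Type*} [DecidableEq ι]

def flipSign (t : Finset ι) (m : ι) : ℝ := if m ∈ t then -1 else 1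

lemma abs_flipSign (t : Finset ι) (m : ι) : |flipSign t m| = 1 := by
  unfold flipSign; split_ifs <;> simp

lemma sum_powerset_flipSign_mul {s : Finset ι} {m : ι} (hm : m ∈ s) (l : ι) :
    ∑ t ∈ s.powerset, flipSign t m * flipSign t l = if m = l then 2 ^ s.card else 0 := by
  split_ifs with hml
  · subst hml
    have h1 : ∀ t, flipSign t m * flipSign t m = 1 := fun t => by
      unfold flipSign; split_ifs <;> norm_num
    simp [h1]
  · rw [← Finset.insert_erase hm, Finset.sum_powerset_insert (Finset.notMem_erase m s),
      ← Finset.sum_add_distrib]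
    refine Finset.sum_eq_zero fun t ht => ?_
    have hmt : m ∉ t := fun h => Finset.notMem_erase m s (Finset.mem_powerset.mp ht h)
    simp only [flipSign, Finset.mem_insert, hmt, Ne.symm hml, true_or, false_or, if_true,
      if_false]
    split_ifs <;> norm_num

variable {Y : Type*} [NormedAddCommGroup Y] [NormedSpace ℝ Y]

/-- Averaging over all sign changes extracts the diagonal `d m φ m (v m)` of the matrix
`φ m (v l)`. -/
lemma norm_sum_diag_le (φ : ι → X →L[ℝ] ℝ) (u : ι → Y) (v : ι → X) (s : Finset ι) (d : ι → ℝ)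
    {C : ℝ} (hC : 0 ≤ C)
    (hφ : ∀ ε : ι → ℝ, (∀ m, |ε m| = 1) → ∀ z, ‖∑ m ∈ s, (ε m * φ m z) • u m‖ ≤ C * ‖z‖)
    (hv : ∀ ε : ι → ℝ, (∀ m, |ε m| = 1) → ‖∑ l ∈ s, (ε l * d l) • v l‖ ≤ ‖∑ l ∈ s, d l • v l‖) :
    ‖∑ m ∈ s, (d m * φ m (v m)) • u m‖ ≤ C * ‖∑ l ∈ s, d l • v l‖ := by
  set W : Finset ι → Y := fun t =>
    ∑ m ∈ s, (flipSign t m * φ m (∑ l ∈ s, (flipSign t l * d l) • v l)) • u m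
  have hW : ∀ t, ‖W t‖ ≤ C * ‖∑ l ∈ s, d l • v l‖ := fun t =>
    (hφ _ (abs_flipSign t) _).trans (mul_le_mul_of_nonneg_left (hv _ (abs_flipSign t)) hC)
  have hsum : ∑ t ∈ s.powerset, W t = (2 ^ s.card : ℝ) • ∑ m ∈ s, (d m * φ m (v m)) • u m := by
    simp only [W, map_sum, map_smul, smul_eq_mul, Finset.mul_sum]
    rw [Finset.sum_comm, Finset.smul_sum]
    refine Finset.sum_congr rfl fun m hm => ?_
    rw [← Finset.sum_smul, smul_smul, Finset.sum_comm]
    congr 1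
    calc ∑ l ∈ s, ∑ t ∈ s.powerset, flipSign t m * (flipSign t l * d l * φ m (v l))
        = ∑ l ∈ s, (if m = l then 2 ^ s.card else 0) * (d l * φ m (v l)) := by
          refine Finset.sum_congr rfl fun l _ => ?_
          rw [← sum_powerset_flipSign_mul hm l, Finset.sum_mul]
          exact Finset.sum_congr rfl fun t _ => by ring
      _ = 2 ^ s.card * (d m * φ m (v m)) := by simp [hm]
  have hpos : (0 : ℝ) < 2 ^ s.card := by positivity
  refine le_of_mul_le_mul_left ?_ hpos
  calc 2 ^ s.card * ‖∑ m ∈ s, (d m * φ m (v m)) • u m‖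
      = ‖∑ t ∈ s.powerset, W t‖ := by rw [hsum, norm_smul, Real.norm_of_nonneg hpos.le]
    _ ≤ ∑ t ∈ s.powerset, C * ‖∑ l ∈ s, d l • v l‖ :=
        (norm_sum_le _ _).trans (Finset.sum_le_sum fun t _ => hW t)
    _ = 2 ^ s.card * (C * ‖∑ l ∈ s, d l • v l‖) := by simp

end averaging

/-- Dominance with the order of the coordinates replaced by `R`, for vectors truncated to a
common finite set `F`: left dominance is the case `R = (· < ·)`, right dominance (with the
roles of `U` and `V` exchanged) the case `R = (· > ·)`. -/
def DominatesAlong (e : ℕ → X) (R : ℕ → ℕ → Prop) (γ : ℝ) : Prop :=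
  ∀ (s F : Finset ℕ) (U V : ℕ → ℕ → ℝ),
    (s : Set ℕ).PairwiseDisjoint (fun n => support (U n)) →
    (s : Set ℕ).PairwiseDisjoint (fun n => support (V n)) →
    (∀ n ∈ s, ∀ i ∈ support (U n), ∀ j ∈ support (V n), R i j) →
    (∀ n ∈ s, ‖∑ i ∈ F, V n i • e i‖ ≤ ‖∑ i ∈ F, U n i • e i‖) →
    ‖∑ n ∈ s, ∑ i ∈ F, V n i • e i‖ ≤ γ * ‖∑ n ∈ s, ∑ i ∈ F, U n i • e i‖

lemma dominatesAlong_of_fin {R : ℕ → ℕ → Prop} {γ : ℝ}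
    (h : ∀ (m : ℕ) (U V : Fin m → ℕ → ℝ),
      (∀ k, (support (U k)).Finite) → (∀ k, (support (V k)).Finite) →
      (Pairwise fun k l => Disjoint (support (U k)) (support (U l))) →
      (Pairwise fun k l => Disjoint (support (V k)) (support (V l))) →
      (∀ k, ∀ i ∈ support (U k), ∀ j ∈ support (V k), R i j) →
      (∀ k, ‖vecSum e (V k)‖ ≤ ‖vecSum e (U k)‖) →
      ‖vecSum e (fun i => ∑ k, V k i)‖ ≤ γ * ‖vecSum e (fun i => ∑ k, U k i)‖) :
    DominatesAlong e R γ := by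
  intro s F U V hU hV hR hUV
  let ι : Fin s.card → ℕ := fun k => s.equivFin.symm k
  have hιs : ∀ k, ι k ∈ s := fun k => (s.equivFin.symm k).2
  have hι : Injective ι := fun k l hkl => s.equivFin.symm.injective (Subtype.ext hkl)
  let trunc (W : ℕ → ℕ → ℝ) (k : Fin s.card) : ℕ → ℝ := (F : Set ℕ).indicator (W (ι k))
  have hsupp (W : ℕ → ℕ → ℝ) (k) : support (trunc W k) ⊆ support (W (ι k)) := by
    simp only [trunc, Set.support_indicator, Set.inter_subset_right]
  have hdisj {W : ℕ → ℕ → ℝ} (hW : (s : Set ℕ).PairwiseDisjoint fun n => support (W n)) :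
      Pairwise fun k l => Disjoint (support (trunc W k)) (support (trunc W l)) :=
    fun k l hkl => (hW (hιs k) (hιs l) (hι.ne hkl)).mono (hsupp W k) (hsupp W l)
  have hsum (W : ℕ → ℕ → ℝ) :
      vecSum e (fun i => ∑ k, trunc W k i) = ∑ n ∈ s, ∑ i ∈ F, W n i • e i := by
    have hF : support (fun i => ∑ k, trunc W k i) ⊆ F := fun i hi => by_contra fun h => hi <|
      Finset.sum_eq_zero fun k _ => Set.indicator_of_notMem h _
    rw [vecSum_eq_sum e hF, ← s.sum_coe_sort, ← s.equivFin.symm.sum_comp, Finset.sum_comm]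
    refine Finset.sum_congr rfl fun i hi => ?_
    simp only [trunc, Set.indicator_of_mem (show i ∈ (F : Set ℕ) from hi), Finset.sum_smul]
    rfl
  rw [← hsum U, ← hsum V]
  exact h _ (trunc U) (trunc V) (fun k => F.finite_toSet.subset Set.support_indicator_subset)
    (fun k => F.finite_toSet.subset Set.support_indicator_subset) (hdisj hU) (hdisj hV)
    (fun k i hi j hj => hR _ (hιs k) i (hsupp U k hi) j (hsupp V k hj))
    fun k => by simpa only [trunc, vecSum_indicator] using hUV _ (hιs k)

lemma LeftDominantWith.dominatesAlong {γ : ℝ} (h : LeftDominantWith e γ) :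
    DominatesAlong e (· < ·) γ :=
  dominatesAlong_of_fin h

lemma RightDominantWith.dominatesAlong {γ : ℝ} (h : RightDominantWith e γ) :
    DominatesAlong e (· > ·) γ :=
  dominatesAlong_of_fin fun m U V hU hV hU' hV' hR hUV =>
    h m V U hV hU hV' hU' (fun k j hj i hi => hR k i hi j hj) hUV

/-- Dominance passes from finitely supported vectors to arbitrary ones: compare the
truncations to a finite set `F`, after shrinking the dominated side by a factor `r < 1`. -/
lemma DominatesAlong.norm_sum_le {R : ℕ → ℕ → Prop} {γ : ℝ} (hD : DominatesAlong e R γ)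
    (hlat : HasLatticeNorm e) (s : Finset ℕ) {x y : ℕ → X} {wx wy : ℕ → ℕ → ℝ}
    (hx : IsDisjointlySupported e wx x) (hy : IsDisjointlySupported e wy y)
    (hR : ∀ n ∈ s, ∀ i ∈ support (wx n), ∀ j ∈ support (wy n), R i j)
    (hxy : ∀ n ∈ s, ‖y n‖ ≤ ‖x n‖) :
    ‖∑ n ∈ s, y n‖ ≤ γ * ‖∑ n ∈ s, x n‖ := by
  have hlim : Tendsto (fun r : ℝ => r * ‖∑ n ∈ s, y n‖) (𝓝[<] 1) (𝓝 ‖∑ n ∈ s, y n‖) := by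
    simpa using ((tendsto_id (x := 𝓝 (1 : ℝ))).mono_left nhdsWithin_le_nhds).mul_const
      ‖∑ n ∈ s, y n‖
  refine le_of_tendsto hlim (eventually_of_mem (Ioo_mem_nhdsLT one_pos) fun r ⟨hr0, _⟩ => ?_)
  have hev : ∀ᶠ F in atTop, ∀ n ∈ s, r * ‖x n‖ ≤ ‖∑ i ∈ F, wx n i • e i‖ := by
    refine (Filter.eventually_all_finset s).mpr fun n hn => ?_
    rcases (norm_nonneg (x n)).eq_or_lt with h0 | h0
    · exact Eventually.of_forall fun F => by rw [← h0, mul_zero]; exact norm_nonneg _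
    · exact ((hx.hasSum n).norm.eventually (eventually_gt_nhds (by nlinarith))).mono
        fun F hF => hF.le
  have hfin : ∀ᶠ F in atTop, r * ‖∑ n ∈ s, ∑ i ∈ F, wy n i • e i‖ ≤
      γ * ‖∑ n ∈ s, ∑ i ∈ F, wx n i • e i‖ := by
    filter_upwards [hev] with F hF
    have hscale (n : ℕ) : ∑ i ∈ F, (r * wy n i) • e i = r • ∑ i ∈ F, wy n i • e i := by
      simp only [Finset.smul_sum, smul_smul]
    have key := hD s F wx (fun n i => r * wy n i) (fun n _ m _ hnm => hx.disjoint hnm)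
      (fun n _ m _ hnm => (hy.smul fun _ => r).disjoint hnm)
      (fun n hn i hi j hj => hR n hn i hi j (support_mul_subset_right _ _ hj))
      fun n hn => by
        rw [hscale, norm_smul, Real.norm_of_nonneg hr0.le]
        calc r * ‖∑ i ∈ F, wy n i • e i‖ ≤ r * ‖x n‖ := mul_le_mul_of_nonneg_left
              ((hlat.norm_sum_le_of_hasSum F (hy.hasSum n)).trans (hxy n hn)) hr0.le
          _ ≤ _ := hF n hn
    rwa [Finset.sum_congr rfl fun n _ => hscale n, ← Finset.smul_sum, norm_smul,
      Real.norm_of_nonneg hr0.le] at key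
  exact le_of_tendsto_of_tendsto ((tendsto_finsetSum s fun n _ => hy.hasSum n).norm.const_mul r)
    ((tendsto_finsetSum s fun n _ => hx.hasSum n).norm.const_mul γ) hfin

lemma tsum_indicator_Iio {q : ℕ → ℝ} (k : ℕ) :
    ∑' i, (Set.Iio k).indicator q i = ∑ i ∈ Finset.range k, q i := by
  rw [tsum_eq_sum (s := Finset.range k) fun i hi =>
    Set.indicator_of_notMem (by simpa using hi) _]
  exact Finset.sum_congr rfl fun i hi => Set.indicator_of_mem (by simpa using hi) _

/-- The first `k` at which the partial sums of `q` reach `1/2` splits `q` into two halves of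
mass larger than `1/4` on either side of `k`. -/
lemma exists_median_split {q : ℕ → ℝ} (hq : Summable q)
    (h1 : 1 ≤ ∑' i, q i) (hsmall : ∀ i, q i < 1 / 4) :
    ∃ k, 0 < q k ∧ 1 / 4 < ∑' i, (Set.Iio k).indicator q i ∧
      1 / 4 < ∑' i, (Set.Ioi k).indicator q i := by
  classical
  have hex : ∃ m, 1 / 2 ≤ ∑ i ∈ Finset.range m, q i :=
    ((hq.hasSum.tendsto_sum_nat.eventually (eventually_gt_nhds (by linarith))).exists).imp
      fun _ h => h.le
  obtain ⟨k, hk⟩ : ∃ k, Nat.find hex = k + 1 :=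
    Nat.exists_eq_succ_of_ne_zero fun h0 => by
      have h := Nat.find_spec hex
      rw [h0] at h
      norm_num at h
  have hge : 1 / 2 ≤ ∑ i ∈ Finset.range (k + 1), q i := hk ▸ Nat.find_spec hex
  have hlt : ∑ i ∈ Finset.range k, q i < 1 / 2 :=
    not_le.mp (Nat.find_min hex (by omega))
  rw [Finset.sum_range_succ] at hge
  have htail : ∑' i, (Set.Ioi k).indicator q i = ∑' i, q i - ∑ i ∈ Finset.range (k + 1), q i := by
    rw [← tsum_indicator_Iio, ← hq.tsum_sub ((hq.indicator _))]
    congr 1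
    ext i
    by_cases hi : k < i
    · simp [Set.indicator, hi, show ¬ i < k + 1 by omega]
    · simp [Set.indicator, hi, show i < k + 1 by omega]
  refine ⟨k, by linarith [hsmall k], by rw [tsum_indicator_Iio]; linarith [hsmall k], ?_⟩
  rw [htail, Finset.sum_range_succ]
  linarith [hsmall k]

def IsSubBlock (e : ℕ → X) (b : ℕ → ℝ) (S : Set ℕ) (x : X) : Prop :=
  ∃ w : ℕ → ℝ, HasSum (fun i => w i • e i) x ∧ (∀ i, |w i| ≤ |b i|) ∧ support w ⊆ S

lemma isSubBlock_zero (e : ℕ → X) (b : ℕ → ℝ) (S : Set ℕ) : IsSubBlock e b S 0 :=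
  ⟨0, by simp, by simp, by simp⟩

section splitting

variable [CompleteSpace X] {b : ℕ → ℝ} {x : X}

lemma exists_isSubBlock_apply_eq (hlat : HasLatticeNorm e)
    (hx : HasSum (fun i => b i • e i) x) (f : X →L[ℝ] ℝ) (S : Set ℕ) :
    ∃ y, IsSubBlock e b S y ∧ f y = ∑' i, S.indicator (fun i => |b i * f (e i)|) i := by
  -- the signs make every coordinate in `S` contribute `|b i * f (e i)|` to `f y`
  set w : ℕ → ℝ := fun i => S.indicator (fun i => (SignType.sign (b i * f (e i)) : ℝ)) i * b i
  have hw : ∀ i, |w i| ≤ |b i| := fun i => by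
    refine (abs_mul _ _).trans_le (mul_le_of_le_one_left (abs_nonneg _) ?_)
    by_cases hi : i ∈ S
    · rcases lt_trichotomy (b i * f (e i)) 0 with h | h | h <;> simp [hi, h]
    · simp [hi]
  obtain ⟨y, hy⟩ := hlat.summable_of_abs_le hx hw
  refine ⟨y, ⟨w, hy, hw, fun i hi => by_contra fun h => by simp [w, h] at hi⟩,
    (f.hasSum hy).tsum_eq.symm.trans ?_⟩
  congr 1
  ext i
  by_cases hi : i ∈ S
  · simp only [map_smul, smul_eq_mul, w, Set.indicator_of_mem hi, ← sign_mul_self]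
    ring
  · simp [w, hi]

lemma exists_index_split (hlat : HasLatticeNorm e) (hx : HasSum (fun i => b i • e i) x)
    (f : X →L[ℝ] ℝ) (hf : f x = 1) :
    ∃ k, b k ≠ 0 ∧ ∃ N F, IsSubBlock e b (Set.Iio k) N ∧ IsSubBlock e b (Set.Ioi k) F ∧
      (1 / 4 ≤ |b k * f (e k)| ∨ (1 / 4 ≤ f N ∧ 1 / 4 ≤ f F)) := by
  set q : ℕ → ℝ := fun i => b i * f (e i)
  have hq : HasSum q 1 := by simpa [q, hf] using f.hasSum hx
  by_cases hbig : ∃ k, 1 / 4 ≤ |q k|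
  · obtain ⟨k, hk⟩ := hbig
    refine ⟨k, fun h => ?_, 0, 0, isSubBlock_zero e b _, isSubBlock_zero e b _, Or.inl hk⟩
    simp [q, h] at hk
    linarith
  push Not at hbig
  have h1 : 1 ≤ ∑' i, |q i| := by
    simpa [hq.tsum_eq] using norm_tsum_le_tsum_norm (f := q) hq.summable.abs
  obtain ⟨k, hk, hN, hF⟩ := exists_median_split hq.summable.abs h1 hbig
  obtain ⟨N, hNb, hNf⟩ := exists_isSubBlock_apply_eq hlat hx f (Set.Iio k)
  obtain ⟨F, hFb, hFf⟩ := exists_isSubBlock_apply_eq hlat hx f (Set.Ioi k)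
  exact ⟨k, fun h => by simp [q, h] at hk, N, F, hNb, hFb, Or.inr ⟨hNf ▸ hN.le, hFf ▸ hF.le⟩⟩

end splitting

namespace IsDisjointlySupported

variable {a : ℕ → ℕ → ℝ} {u : ℕ → X}

lemma injective (hu : IsDisjointlySupported e a u) {κ : ℕ → ℕ} (hκ : ∀ n, a n (κ n) ≠ 0) :
    Injective κ := fun n m h => by_contra fun hnm =>
  Set.disjoint_left.mp (hu.disjoint hnm) (hκ n) (by rw [mem_support, h]; exact hκ m)

lemma exists_of_isSubBlock (hu : IsDisjointlySupported e a u) {S : ℕ → Set ℕ} {x : ℕ → X}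
    (hx : ∀ n, IsSubBlock e (a n) (S n) (x n)) :
    ∃ w, IsDisjointlySupported e w x ∧ (∀ n i, |w n i| ≤ |a n i|) ∧ ∀ n, support (w n) ⊆ S n := by
  choose w hw hwa hwS using hx
  have hsupp (n : ℕ) : support (w n) ⊆ support (a n) := fun i hi =>
    abs_pos.mp ((abs_pos.mpr hi).trans_le (hwa n i))
  exact ⟨w, ⟨hw, fun n m hnm => (hu.disjoint hnm).mono (hsupp n) (hsupp m)⟩, hwa, hwS⟩

end IsDisjointlySupported

section estimates

variable {a : ℕ → ℕ → ℝ} {u : ℕ → X} {κ : ℕ → ℕ} {t : Finset ℕ}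

lemma norm_sum_smul_single_le (hlat : HasLatticeNorm e) (hu : IsDisjointlySupported e a u)
    {L : ℝ} (hL : 0 ≤ L) (hκ : ∀ n ∈ t, 1 ≤ L * |a n (κ n)|) (c : ℕ → ℝ) :
    ‖∑ n ∈ t, c n • e (κ n)‖ ≤ L * ‖∑ n ∈ t, c n • u n‖ := by
  calc ‖∑ n ∈ t, c n • e (κ n)‖ ≤ ‖∑ n ∈ t, (L * c n) • u n‖ :=
        hlat.norm_sum_le_of_disjoint (fun n _ => (hu.smul _).hasSum n)
          (fun n _ => hasSum_single_smul e (κ n) (c n))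
          (fun n _ m _ hnm => (hu.smul _).disjoint hnm)
          fun n hn i => by
            rcases eq_or_ne i (κ n) with rfl | hi
            · simp only [Pi.single_eq_same, abs_mul, abs_of_nonneg hL]
              linarith [le_mul_of_one_le_right (abs_nonneg (c n)) (hκ n hn)]
            · simp only [Pi.single_eq_of_ne hi, abs_zero]
              positivity
    _ = L * ‖∑ n ∈ t, c n • u n‖ := by
        simp only [← smul_smul, ← Finset.smul_sum, norm_smul, Real.norm_of_nonneg hL]


lemma norm_sum_blockCoord_diag_le (he : IsSequenceSpaceBasis e) (hu : IsDisjointlySupported e a u)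
    (ha : ∀ m, a m ≠ 0) {P : X →L[ℝ] X} (hP : ∀ z, P z ∈ spanCl u) {v : ℕ → X}
    {w : ℕ → ℕ → ℝ} (hv : IsDisjointlySupported e w v) (s : Finset ℕ) (d : ℕ → ℝ) :
    ‖∑ m ∈ s, (d m * blockCoord he a m (P (v m))) • u m‖ ≤ ‖P‖ * ‖∑ l ∈ s, d l • v l‖ :=
  norm_sum_diag_le (fun m => (blockCoord he a m).comp P) u v s d (norm_nonneg P)
    (fun ε hε z => (norm_sum_blockCoord_smul_le he hu ha s (fun m => (hε m).le) (hP z)).trans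
      (P.le_opNorm z))
    fun ε hε => hv.norm_sum_smul_le he.hasLatticeNorm fun l _ => by rw [abs_mul, hε l, one_mul]

lemma norm_sum_smul_le_of_blockCoord_single (he : IsSequenceSpaceBasis e)
    (hu : IsDisjointlySupported e a u) (ha : ∀ m, a m ≠ 0) {P : X →L[ℝ] X}
    (hP : ∀ z, P z ∈ spanCl u) (hκ : Injective κ) {δ : ℝ} (hδ : 0 < δ)
    (hdiag : ∀ n ∈ t, δ ≤ |blockCoord he a n (P (e (κ n)))|) (c : ℕ → ℝ) :
    ‖∑ n ∈ t, c n • u n‖ ≤ ‖P‖ / δ * ‖∑ n ∈ t, c n • e (κ n)‖ := by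
  set β : ℕ → ℝ := fun n => blockCoord he a n (P (e (κ n)))
  have hβ : ∀ n ∈ t, β n ≠ 0 := fun n hn => abs_pos.mp (hδ.trans_le (hdiag n hn))
  have he_κ := isDisjointlySupported_single (e := e) hκ
  calc ‖∑ n ∈ t, c n • u n‖ = ‖∑ n ∈ t, (c n / β n * β n) • u n‖ := by
        congr 1
        exact Finset.sum_congr rfl fun n hn => by rw [div_mul_cancel₀ _ (hβ n hn)]
    _ ≤ ‖P‖ * ‖∑ n ∈ t, (c n / β n) • e (κ n)‖ :=
        norm_sum_blockCoord_diag_le he hu ha hP he_κ t _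
    _ ≤ ‖P‖ * ‖∑ n ∈ t, (δ⁻¹ * c n) • e (κ n)‖ := by
        gcongr 1
        refine he_κ.norm_sum_smul_le he.hasLatticeNorm fun n hn => ?_
        rw [abs_div, abs_mul, abs_inv, abs_of_pos hδ, div_eq_inv_mul]
        exact mul_le_mul_of_nonneg_right (inv_anti₀ hδ (hdiag n hn)) (abs_nonneg _)
    _ = ‖P‖ / δ * ‖∑ n ∈ t, c n • e (κ n)‖ := by
        rw [Finset.sum_congr rfl fun n _ => mul_smul _ _ _, ← Finset.smul_sum, norm_smul,
          Real.norm_of_nonneg (inv_nonneg.mpr hδ.le)]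
        ring

lemma norm_sum_smul_single_le_of_dominatesAlong {R : ℕ → ℕ → Prop} {γ : ℝ}
    (hD : DominatesAlong e R γ) (hγ : 0 ≤ γ) (hlat : HasLatticeNorm e) (hone : ∀ j, ‖e j‖ = 1)
    (hu : IsDisjointlySupported e a u) (hκ : Injective κ) {N : ℕ → X} {w : ℕ → ℕ → ℝ}
    (hN : IsDisjointlySupported e w N) (hwa : ∀ n i, |w n i| ≤ |a n i|)
    (hwκ : ∀ n, ∀ i ∈ support (w n), R i (κ n)) {L : ℝ} (hL : 0 ≤ L)
    (hNL : ∀ n ∈ t, 1 ≤ L * ‖N n‖) (c : ℕ → ℝ) :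
    ‖∑ n ∈ t, c n • e (κ n)‖ ≤ γ * L * ‖∑ n ∈ t, c n • u n‖ := by
  calc ‖∑ n ∈ t, c n • e (κ n)‖ ≤ γ * ‖∑ n ∈ t, (L * c n) • N n‖ :=
        hD.norm_sum_le hlat t (hN.smul _) ((isDisjointlySupported_single hκ).smul c)
          (fun n _ i hi j hj => by
            obtain rfl : j = κ n := Pi.support_single_subset (support_mul_subset_right _ _ hj)
            exact hwκ n i (support_mul_subset_right _ _ hi))
          fun n hn => by
            simp only [norm_smul, hone, mul_one, Real.norm_eq_abs, abs_mul, abs_of_nonneg hL]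
            calc |c n| ≤ |c n| * (L * ‖N n‖) := le_mul_of_one_le_right (abs_nonneg _) (hNL n hn)
              _ = _ := by ring
    _ = γ * (L * ‖∑ n ∈ t, c n • N n‖) := by
        rw [Finset.sum_congr rfl fun n _ => mul_smul _ _ _, ← Finset.smul_sum, norm_smul,
          Real.norm_of_nonneg hL]
    _ ≤ γ * (L * ‖∑ n ∈ t, c n • u n‖) := by
        gcongr 2
        exact hlat.norm_sum_le_of_disjoint (fun n _ => (hu.smul c).hasSum n)
          (fun n _ => (hN.smul c).hasSum n) (fun n _ m _ hnm => (hu.smul c).disjoint hnm)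
          fun n _ i => by
            simpa only [abs_mul] using mul_le_mul_of_nonneg_left (hwa n i) (abs_nonneg _)
    _ = γ * L * ‖∑ n ∈ t, c n • u n‖ := by ring

lemma norm_sum_smul_le_of_dominatesAlong {R : ℕ → ℕ → Prop} {γ : ℝ}
    (hD : DominatesAlong e R γ) (he : IsSequenceSpaceBasis e) (hu : IsDisjointlySupported e a u)
    (ha : ∀ m, a m ≠ 0) (hnorm : ∀ n, ‖u n‖ = 1) {P : X →L[ℝ] X} (hP : ∀ z, P z ∈ spanCl u)
    (hκ : Injective κ) {F : ℕ → X} {w : ℕ → ℕ → ℝ} (hF : IsDisjointlySupported e w F)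
    (hwa : ∀ n i, |w n i| ≤ |a n i|) (hwκ : ∀ n, ∀ j ∈ support (w n), R (κ n) j) {δ : ℝ}
    (hδ : 0 < δ) (hFδ : ∀ n ∈ t, δ ≤ blockCoord he a n (P (F n))) (c : ℕ → ℝ) :
    ‖∑ n ∈ t, c n • u n‖ ≤ ‖P‖ / δ * γ * ‖∑ n ∈ t, c n • e (κ n)‖ := by
  set β : ℕ → ℝ := fun n => blockCoord he a n (P (F n))
  calc ‖∑ n ∈ t, c n • u n‖ ≤ ‖∑ n ∈ t, (δ⁻¹ * (c n * β n)) • u n‖ :=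
        hu.norm_sum_smul_le he.hasLatticeNorm fun n hn => by
          rw [abs_mul, abs_mul, abs_of_pos (hδ.trans_le (hFδ n hn)), abs_inv, abs_of_pos hδ]
          calc |c n| ≤ |c n| * (δ⁻¹ * β n) :=
                le_mul_of_one_le_right (abs_nonneg _) ((one_le_inv_mul₀ hδ).mpr (hFδ n hn))
            _ = _ := by ring
    _ = δ⁻¹ * ‖∑ n ∈ t, (c n * β n) • u n‖ := by
        rw [Finset.sum_congr rfl fun n _ => mul_smul _ _ _, ← Finset.smul_sum, norm_smul,
          Real.norm_of_nonneg (inv_nonneg.mpr hδ.le)]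
    _ ≤ δ⁻¹ * (‖P‖ * ‖∑ n ∈ t, c n • F n‖) := by
        gcongr
        exact norm_sum_blockCoord_diag_le he hu ha hP hF t c
    _ ≤ δ⁻¹ * (‖P‖ * (γ * ‖∑ n ∈ t, c n • e (κ n)‖)) := by
        gcongr
        refine hD.norm_sum_le he.hasLatticeNorm t ((isDisjointlySupported_single hκ).smul c)
          (hF.smul c) (fun n _ i hi j hj => ?_) fun n _ => ?_
        · obtain rfl : i = κ n := Pi.support_single_subset (support_mul_subset_right _ _ hi)
          exact hwκ n j (support_mul_subset_right _ _ hj)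
        · rw [norm_smul, norm_smul, he.norm_eq_one, mul_one]
          refine mul_le_of_le_one_right (norm_nonneg _) ?_
          exact (he.hasLatticeNorm.norm_le_of_hasSum (hF.hasSum n) (hu.hasSum n) (hwa n)).trans_eq
            (hnorm n)
    _ = ‖P‖ / δ * γ * ‖∑ n ∈ t, c n • e (κ n)‖ := by ring

end estimates

section equivalence

variable {Y : Type*} [NormedAddCommGroup Y] [NormedSpace ℝ Y]

lemma norm_sum_le_add_of_filter {ι E F : Type*} [SeminormedAddCommGroup E]
    [SeminormedAddCommGroup F] (s : Finset ι) (p : ι → Prop) [DecidablePred p]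
    {x : ι → E} {y : ι → F} {A B : ℝ} (hA : 0 ≤ A) (hB : 0 ≤ B)
    (hy : ∀ t ⊆ s, ‖∑ i ∈ t, y i‖ ≤ ‖∑ i ∈ s, y i‖)
    (hp : ‖∑ i ∈ s.filter p, x i‖ ≤ A * ‖∑ i ∈ s.filter p, y i‖)
    (hnp : ‖∑ i ∈ s.filter (¬ p ·), x i‖ ≤ B * ‖∑ i ∈ s.filter (¬ p ·), y i‖) :
    ‖∑ i ∈ s, x i‖ ≤ (A + B) * ‖∑ i ∈ s, y i‖ := by
  calc ‖∑ i ∈ s, x i‖ = ‖∑ i ∈ s.filter p, x i + ∑ i ∈ s.filter (¬ p ·), x i‖ := by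
        rw [Finset.sum_filter_add_sum_filter_not]
    _ ≤ A * ‖∑ i ∈ s.filter p, y i‖ + B * ‖∑ i ∈ s.filter (¬ p ·), y i‖ :=
        (norm_add_le _ _).trans (add_le_add hp hnp)
    _ ≤ A * ‖∑ i ∈ s, y i‖ + B * ‖∑ i ∈ s, y i‖ := by
        gcongr <;> exact hy _ (Finset.filter_subset _ _)
    _ = (A + B) * ‖∑ i ∈ s, y i‖ := by ring

lemma basisEquiv_of_le {ι : Type*} {u : ι → X} {v : ι → Y} {C : ℝ} (hC : 0 ≤ C)
    (huv : ∀ (c : ι → ℝ) (s : Finset ι), ‖∑ i ∈ s, c i • u i‖ ≤ C * ‖∑ i ∈ s, c i • v i‖)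
    (hvu : ∀ (c : ι → ℝ) (s : Finset ι), ‖∑ i ∈ s, c i • v i‖ ≤ C * ‖∑ i ∈ s, c i • u i‖) :
    BasisEquiv u v := by
  refine ⟨(C + 1)⁻¹, C, by positivity, fun c s => ⟨?_, hvu c s⟩⟩
  rw [inv_mul_le_iff₀ (by positivity)]
  nlinarith [huv c s, norm_nonneg (∑ i ∈ s, c i • v i)]

lemma exists_strictMono_permutativelyEquiv {u : ℕ → X} {v : ℕ → Y} {κ : ℕ → ℕ}
    (hκ : Injective κ) (h : BasisEquiv u fun n => v (κ n)) :
    ∃ k : ℕ → ℕ, StrictMono k ∧ PermutativelyEquiv u fun n => v (k n) := by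
  have := (Set.infinite_range_of_injective hκ).to_subtype
  let φ := Nat.Subtype.orderIsoOfNat (Set.range κ)
  refine ⟨fun n => φ n, fun n m hnm => φ.strictMono hnm,
    (Equiv.ofInjective κ hκ).trans φ.symm.toEquiv, ?_⟩
  convert h using 3
  simp

end equivalence

lemma basisEquiv_of_dominatesAlong {a : ℕ → ℕ → ℝ} {u : ℕ → X} {R : ℕ → ℕ → Prop} {γ : ℝ}
    (hD : DominatesAlong e R γ) (hγ : 0 ≤ γ) (he : IsSequenceSpaceBasis e)
    (hu : IsDisjointlySupported e a u) (hnorm : ∀ n, ‖u n‖ = 1) {P : X →L[ℝ] X}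
    (hP : ∀ z, P z ∈ spanCl u) {κ : ℕ → ℕ} (hκ : ∀ n, a n (κ n) ≠ 0) {N F : ℕ → X}
    (hN : ∀ n, IsSubBlock e (a n) {i | R i (κ n)} (N n))
    (hF : ∀ n, IsSubBlock e (a n) {j | R (κ n) j} (F n))
    (hcase : ∀ n, 1 / 4 ≤ |a n (κ n) * blockCoord he a n (P (e (κ n)))| ∨
      (1 / 4 ≤ blockCoord he a n (P (N n)) ∧ 1 / 4 ≤ blockCoord he a n (P (F n)))) :
    BasisEquiv u fun n => e (κ n) := by
  classical
  have ha : ∀ m, a m ≠ 0 := fun m h => hκ m (by simp [h])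
  have hinj := hu.injective hκ
  have hlat := he.hasLatticeNorm
  obtain ⟨wN, hwN, hwNa, hwNR⟩ := hu.exists_of_isSubBlock hN
  obtain ⟨wF, hwF, hwFa, hwFR⟩ := hu.exists_of_isSubBlock hF
  have hf (n : ℕ) (z : X) : |blockCoord he a n (P z)| ≤ ‖P‖ * ‖z‖ :=
    (abs_blockCoord_le he hu ha (hnorm n) (hP z)).trans (P.le_opNorm z)
  set big : ℕ → Prop := fun n => 1 / 4 ≤ |a n (κ n) * blockCoord he a n (P (e (κ n)))|
  have hbig_a (n : ℕ) (h : big n) : 1 ≤ 4 * ‖P‖ * |a n (κ n)| := by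
    have := hf n (e (κ n))
    rw [he.norm_eq_one, mul_one] at this
    have := h.trans_eq (abs_mul _ _)
    nlinarith [abs_nonneg (a n (κ n))]
  have hbig_f (n : ℕ) (h : big n) : 1 / 4 ≤ |blockCoord he a n (P (e (κ n)))| := by
    have := hlat.abs_le_norm_of_hasSum (he.norm_eq_one (κ n)) (hu.hasSum n)
    rw [hnorm] at this
    have := h.trans_eq (abs_mul _ _)
    nlinarith [abs_nonneg (blockCoord he a n (P (e (κ n))))]
  have hsmall_N (n : ℕ) (h : ¬ big n) : 1 ≤ 4 * ‖P‖ * ‖N n‖ := by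
    have := ((hcase n).resolve_left h).1.trans ((le_abs_self _).trans (hf n (N n)))
    linarith
  have hsmall_F (n : ℕ) (h : ¬ big n) : 1 / 4 ≤ blockCoord he a n (P (F n)) :=
    ((hcase n).resolve_left h).2
  have he_κ := isDisjointlySupported_single (e := e) hinj
  refine basisEquiv_of_le (C := 4 * ‖P‖ * (1 + γ)) (by positivity) (fun c s => ?_) fun c s => ?_
  · refine (norm_sum_le_add_of_filter s big (by positivity) (by positivity)
      (fun t ht => he_κ.norm_sum_le_of_subset hlat ht c)
      (norm_sum_smul_le_of_blockCoord_single he hu ha hP hinj (by norm_num)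
        (fun n hn => hbig_f n (Finset.mem_filter.mp hn).2) c)
      (norm_sum_smul_le_of_dominatesAlong hD he hu ha hnorm hP hinj hwF hwFa hwFR (by norm_num)
        (fun n hn => hsmall_F n (Finset.mem_filter.mp hn).2) c)).trans_eq (by ring)
  · refine (norm_sum_le_add_of_filter s big (by positivity) (by positivity)
      (fun t ht => hu.norm_sum_le_of_subset hlat ht c)
      (norm_sum_smul_single_le hlat hu (by positivity)
        (fun n hn => hbig_a n (Finset.mem_filter.mp hn).2) c)
      (norm_sum_smul_single_le_of_dominatesAlong hD hγ hlat he.norm_eq_one hu hinj hwN hwNa hwNR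
        (by positivity) (fun n hn => hsmall_N n (Finset.mem_filter.mp hn).2) c)).trans_eq
      (by ring)

end

/-- Theorem 5.6. Let `X` be a separable left- or right-dominant sequence
space with canonical basis `e`, and let `(u n)` be a normalized sequence of pairwise disjointly
supported vectors whose closed span is the range of a bounded projection on `X`. Then `(u n)`
is permutatively equivalent to a subsequence of `e`. -/
theorem statement3
    {X : Type*} [NormedAddCommGroup X] [NormedSpace ℝ X] [CompleteSpace X]
    (e : ℕ → X) (he : IsUnconditionalBasis e) (hone : ∀ j, ‖e j‖ = 1)
    (hlat : ∀ a b : ℕ → ℝ, (Function.support a).Finite → (Function.support b).Finite →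
      (∀ i, |a i| ≤ |b i|) → ‖vecSum e a‖ ≤ ‖vecSum e b‖)
    (hdom : IsLeftDominant e ∨ IsRightDominant e)
    (u : ℕ → X) (hnorm : ∀ n, ‖u n‖ = 1)
    (a : ℕ → ℕ → ℝ) (ha : ∀ n, HasSum (fun i => a n i • e i) (u n))
    (hdisj : Pairwise fun m n => Disjoint (Function.support (a m)) (Function.support (a n)))
    (hcompl : IsComplementedSeq u) :
    ∃ k : ℕ → ℕ, StrictMono k ∧ PermutativelyEquiv u (fun n => e (k n)) := by
  obtain ⟨P, hPP, hPu⟩ := hcompl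
  have hb : IsSequenceSpaceBasis e := ⟨he, hone, hlat⟩
  have hu : IsDisjointlySupported e a u := ⟨ha, hdisj⟩
  have hP : ∀ z, P z ∈ spanCl u := fun z => hPu ▸ ⟨z, rfl⟩
  have hPfix : ∀ n, P (u n) = u n := fun n => by
    obtain ⟨z, hz⟩ : u n ∈ LinearMap.range (P : X →ₗ[ℝ] X) := hPu ▸ (inSpanCl u n).2
    rw [← hz]
    exact DFunLike.congr_fun hPP z
  have ha0 : ∀ n, a n ≠ 0 := fun n h => by
    have : u n = 0 := (ha n).unique (by simp [h])
    simpa [this] using hnorm n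
  choose κ hκ N F hN hF hcase using fun n => exists_index_split hlat (ha n)
    ((blockCoord hb a n).comp P) (by simp [hPfix, blockCoord_self hb hu (ha0 n)])
  refine exists_strictMono_permutativelyEquiv (hu.injective hκ) ?_
  rcases hdom with ⟨γ, hγ, hL⟩ | ⟨γ, hγ, hR⟩
  · exact basisEquiv_of_dominatesAlong hL.dominatesAlong (by linarith) hb hu hnorm hP hκ hN hF hcase
  · exact basisEquiv_of_dominatesAlong hR.dominatesAlong (by linarith) hb hu hnorm hP hκ hF hN
      fun n => (hcase n).imp_right And.symm

end CK
end
end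

section
/- A sequence space X is left-dominant with constant γ if and only if its dual Köthe sequence space X* is right-dominant with constant γ. -/
open Function Filter
open scoped BigOperators ENNReal

noncomputable section

/-!
Fix `g` in the unit ball of `X` and cut it along the blocks: `g_k = 1_{supp p_k} g`. Then
`⟪p_k, g_k⟫ ≤ ‖p_k‖_* ‖g_k‖ ≤ ‖q_k‖_* ‖g_k‖`, and `‖q_k‖_* ‖g_k‖` is approached by `⟪q_k, w_k⟫`
with `w_k` supported on `supp q_k` and `‖w_k‖ ≤ ‖g_k‖`. Left dominance gives
`‖∑ w_k‖ ≤ γ ‖∑ g_k‖ ≤ γ`, hence `⟪∑ p_k, g⟫ ≤ ∑ ⟪q_k, w_k⟫ = ⟪∑ q_k, ∑ w_k⟫ ≤ γ ‖∑ q_k‖_*`.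

This transfer never uses the order of the blocks, only dominance between subfamilies of them.
Applied to `X*` it turns right dominance of `X*` into left dominance of `X**`, and `X** = X` on
finitely supported sequences by Hahn–Banach.
-/

theorem ENNReal.finsetSum_iSup_le {α κ : Type*} {s : Finset α} {f : α → κ → ℝ≥0∞} {c : ℝ≥0∞}
    (h : ∀ g : α → κ, ∑ a ∈ s, f a (g a) ≤ c) : ∑ a ∈ s, ⨆ j, f a j ≤ c := by
  classical
  calc ∑ a ∈ s, ⨆ j, f a j ≤ ∑ a ∈ s, ⨆ g : α → κ, f a (g a) :=
        Finset.sum_le_sum fun a _ => iSup_le fun j => le_iSup_of_le (fun _ => j) le_rfl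
    _ = ⨆ g : α → κ, ∑ a ∈ s, f a (g a) := by
        refine ENNReal.finsetSum_iSup fun g₁ g₂ =>
          ⟨fun a => if f a (g₁ a) ≤ f a (g₂ a) then g₂ a else g₁ a, fun a => ?_⟩
        dsimp only
        split_ifs with hle <;> simp [hle, le_of_not_ge]
    _ ≤ c := iSup_le h

namespace CK

theorem sum_apply_eq_of_mem {ι M : Type*} [Fintype ι] [AddCommMonoid M] {S : ι → Set ℕ}
    (hS : Pairwise fun k l => Disjoint (S k) (S l)) {F : ι → ℕ → M}
    (hF : ∀ k, support (F k) ⊆ S k) {k : ι} {i : ℕ} (hi : i ∈ S k) :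
    ∑ l, F l i = F k i :=
  Finset.sum_eq_single k
    (fun l _ hl => notMem_support.1 fun hl' => Set.disjoint_left.1 (hS hl) (hF l hl') hi)
    (by simp)

def absPairing (f g : ℕ → ℝ) : ℝ≥0∞ := ∑' n, ENNReal.ofReal |f n * g n|

theorem absPairing_comm (f g : ℕ → ℝ) : absPairing f g = absPairing g f := by
  simp [absPairing, mul_comm]

theorem absPairing_mono_left {f f' : ℕ → ℝ} (h : ∀ i, |f i| ≤ |f' i|) (g : ℕ → ℝ) :
    absPairing f g ≤ absPairing f' g :=
  ENNReal.tsum_le_tsum fun i => ENNReal.ofReal_le_ofReal <| by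
    rw [abs_mul, abs_mul]; exact mul_le_mul_of_nonneg_right (h i) (abs_nonneg _)

theorem absPairing_smul_right (f g : ℕ → ℝ) (c : ℝ) :
    absPairing f (c • g) = ENNReal.ofReal |c| * absPairing f g := by
  rw [absPairing, absPairing, ← ENNReal.tsum_mul_left]
  congr 1; funext i
  rw [Pi.smul_apply, smul_eq_mul, mul_left_comm, abs_mul, ENNReal.ofReal_mul (abs_nonneg c)]

theorem absPairing_smul_left (f g : ℕ → ℝ) (c : ℝ) :
    absPairing (c • f) g = ENNReal.ofReal |c| * absPairing f g := by
  rw [absPairing_comm, absPairing_smul_right, absPairing_comm]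

theorem absPairing_indicator_right {f : ℕ → ℝ} {s : Set ℕ} (hs : support f ⊆ s) (g : ℕ → ℝ) :
    absPairing f (s.indicator g) = absPairing f g := by
  refine congrArg tsum (funext fun i => ?_)
  by_cases hi : i ∈ s
  · rw [Set.indicator_of_mem hi]
  · simp [notMem_support.1 fun h => hi (hs h)]

theorem absPairing_single_right (f : ℕ → ℝ) (j : ℕ) :
    absPairing f (Pi.single j 1) = ENNReal.ofReal |f j| := by
  rw [absPairing, tsum_eq_single j fun i hi => by simp [Pi.single_eq_of_ne hi]]
  simp

theorem absPairing_eq_sum_of_support_subset {f : ℕ → ℝ} {t : Finset ℕ} (ht : support f ⊆ t)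
    (g : ℕ → ℝ) : absPairing f g = ENNReal.ofReal (∑ i ∈ t, |f i * g i|) := by
  rw [absPairing, ENNReal.ofReal_sum_of_nonneg fun i _ => abs_nonneg _]
  exact tsum_eq_sum fun i hi => by simp [notMem_support.1 fun h => hi (ht h)]

theorem absPairing_sum_left_le {n : ℕ} (p : Fin n → ℕ → ℝ) (g : ℕ → ℝ) :
    absPairing (fun i => ∑ k, p k i) g ≤ ∑ k, absPairing (p k) g := by
  simp only [absPairing]
  rw [← Summable.tsum_finsetSum fun _ _ => ENNReal.summable]
  refine ENNReal.tsum_le_tsum fun i => ?_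
  rw [← ENNReal.ofReal_sum_of_nonneg fun _ _ => abs_nonneg _, Finset.sum_mul]
  exact ENNReal.ofReal_le_ofReal (Finset.abs_sum_le_sum_abs _ _)

theorem sum_absPairing_le_absPairing_sum {n : ℕ} {q w : Fin n → ℕ → ℝ}
    (hq : Pairwise fun k l => Disjoint (support (q k)) (support (q l)))
    (hw : ∀ k, support (w k) ⊆ support (q k)) :
    ∑ k, absPairing (q k) (w k) ≤ absPairing (fun i => ∑ k, q k i) (fun i => ∑ k, w k i) := by
  simp only [absPairing]
  rw [← Summable.tsum_finsetSum fun _ _ => ENNReal.summable]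
  refine ENNReal.tsum_le_tsum fun i => ?_
  by_cases hi : ∃ k, i ∈ support (q k)
  · obtain ⟨k, hk⟩ := hi
    have hqw : ∀ l, support (fun i => ENNReal.ofReal |q l i * w l i|) ⊆ support (q l) :=
      fun l i h => by_contra fun h' => h (by simp [notMem_support.1 h'])
    rw [sum_apply_eq_of_mem hq hqw hk, sum_apply_eq_of_mem hq (fun _ => subset_rfl) hk,
      sum_apply_eq_of_mem hq hw hk]
  · simp only [not_exists, notMem_support] at hi
    simp [hi]

section KotheDual

variable {N : (ℕ → ℝ) → ℝ≥0∞}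

theorem kotheDual_eq_iSup_absPairing (N : (ℕ → ℝ) → ℝ≥0∞) (f : ℕ → ℝ) :
    kotheDual N f = ⨆ g : {g : ℕ → ℝ // N g ≤ 1}, absPairing f g :=
  rfl

theorem absPairing_le_kotheDual {g : ℕ → ℝ} (hg : N g ≤ 1) (f : ℕ → ℝ) :
    absPairing f g ≤ kotheDual N f :=
  le_iSup (fun g : {g : ℕ → ℝ // N g ≤ 1} => absPairing f g) ⟨g, hg⟩

theorem kotheDual_smul (c : ℝ) (f : ℕ → ℝ) :
    kotheDual N (c • f) = ENNReal.ofReal |c| * kotheDual N f := by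
  simp only [kotheDual_eq_iSup_absPairing, absPairing_smul_left, ENNReal.mul_iSup]

theorem kotheDual_mono {f f' : ℕ → ℝ} (h : ∀ i, |f i| ≤ |f' i|) :
    kotheDual N f ≤ kotheDual N f' :=
  iSup_mono fun g => absPairing_mono_left h g

theorem eq_zero_of_kotheDual_eq_zero (hone : ∀ j, N (Pi.single j 1) ≤ 1) {f : ℕ → ℝ}
    (hf : kotheDual N f = 0) : f = 0 := by
  funext j
  have hj := absPairing_le_kotheDual (hone j) f
  rw [hf, absPairing_single_right, nonpos_iff_eq_zero, ENNReal.ofReal_eq_zero] at hj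
  exact abs_nonpos_iff.1 hj

theorem absPairing_le_kotheDual_mul (hzero : ∀ x, N x = 0 → x = 0)
    (hsmul : ∀ (c : ℝ) (x : ℕ → ℝ), N (c • x) = ENNReal.ofReal |c| * N x)
    (f : ℕ → ℝ) {g : ℕ → ℝ} (hg : N g ≠ ⊤) : absPairing f g ≤ kotheDual N f * N g := by
  rcases eq_or_ne (N g) 0 with h0 | h0
  · simp [hzero g h0, absPairing]
  set t := (N g).toReal
  have ht : 0 < t := ENNReal.toReal_pos h0 hg
  have hNg : ENNReal.ofReal t = N g := ENNReal.ofReal_toReal hg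
  have hunit : N (t⁻¹ • g) ≤ 1 := by
    rw [hsmul, abs_of_pos (inv_pos.2 ht), ← hNg, ← ENNReal.ofReal_mul (inv_nonneg.2 ht.le),
      inv_mul_cancel₀ ht.ne', ENNReal.ofReal_one]
  calc absPairing f g = N g * absPairing f (t⁻¹ • g) := by
        conv_lhs => rw [← smul_inv_smul₀ ht.ne' g]
        rw [absPairing_smul_right, abs_of_pos ht, hNg]
    _ ≤ N g * kotheDual N f := by gcongr; exact absPairing_le_kotheDual hunit f
    _ = kotheDual N f * N g := mul_comm _ _

theorem abs_sum_indicator_le {ι : Type*} [Fintype ι] {S : ι → Set ℕ}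
    (hS : Pairwise fun k l => Disjoint (S k) (S l)) (g : ℕ → ℝ) (i : ℕ) :
    |∑ k, (S k).indicator g i| ≤ |g i| := by
  rw [← Finset.indicator_biUnion_apply _ _ (hS.set_pairwise _)]
  exact norm_indicator_le_norm_self g i

variable {n : ℕ} {p q : Fin n → ℕ → ℝ} {γ : ℝ}

theorem sum_mul_absPairing_le (hzero : ∀ x, N x = 0 → x = 0)
    (hsmul : ∀ (c : ℝ) (x : ℕ → ℝ), N (c • x) = ENNReal.ofReal |c| * N x)
    (hmono : ∀ x y : ℕ → ℝ, (∀ i, |x i| ≤ |y i|) → N x ≤ N y)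
    (hdp : Pairwise fun k l => Disjoint (support (p k)) (support (p l)))
    (hdq : Pairwise fun k l => Disjoint (support (q k)) (support (q l)))
    (hdom : ∀ a b : Fin n → ℕ → ℝ, (∀ k, support (a k) ⊆ support (p k)) →
      (∀ k, support (b k) ⊆ support (q k)) → (∀ k, N (b k) ≤ N (a k)) →
      N (fun i => ∑ k, b k i) ≤ ENNReal.ofReal γ * N (fun i => ∑ k, a k i))
    {g : ℕ → ℝ} (hg : N g ≤ 1) {h : Fin n → ℕ → ℝ} (hh : ∀ k, N (h k) ≤ 1) :
    ∑ k, N ((support (p k)).indicator g) * absPairing (q k) (h k) ≤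
      ENNReal.ofReal γ * kotheDual N (fun i => ∑ k, q k i) := by
  set a : Fin n → ℕ → ℝ := fun k => (support (p k)).indicator g
  have hNa : ∀ k, ENNReal.ofReal (N (a k)).toReal = N (a k) := fun k =>
    ENNReal.ofReal_toReal (ne_top_of_le_ne_top ENNReal.one_ne_top
      ((hmono _ _ fun i => norm_indicator_le_norm_self g i).trans hg))
  set w : Fin n → ℕ → ℝ := fun k => (N (a k)).toReal • (support (q k)).indicator (h k)
  have hw : ∀ k, support (w k) ⊆ support (q k) := fun k =>
    (support_const_smul_subset _ _).trans Set.support_indicator_subset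
  have hNw : ∀ k, N (w k) ≤ N (a k) := fun k => calc
    N (w k) = N (a k) * N ((support (q k)).indicator (h k)) := by
      rw [hsmul, abs_of_nonneg ENNReal.toReal_nonneg, hNa]
    _ ≤ N (a k) * 1 := by
      gcongr; exact (hmono _ _ fun i => norm_indicator_le_norm_self (h k) i).trans (hh k)
    _ = N (a k) := mul_one _
  have hNsum : N (fun i => ∑ k, w k i) ≤ ENNReal.ofReal γ := calc
    N (fun i => ∑ k, w k i) ≤ ENNReal.ofReal γ * N (fun i => ∑ k, a k i) :=
      hdom a w (fun k => Set.support_indicator_subset) hw hNw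
    _ ≤ ENNReal.ofReal γ * 1 := by
      gcongr; exact (hmono _ _ (abs_sum_indicator_le hdp g)).trans hg
    _ = ENNReal.ofReal γ := mul_one _
  calc ∑ k, N (a k) * absPairing (q k) (h k) = ∑ k, absPairing (q k) (w k) :=
        Finset.sum_congr rfl fun k _ => by
          rw [absPairing_smul_right, absPairing_indicator_right subset_rfl,
            abs_of_nonneg ENNReal.toReal_nonneg, hNa]
    _ ≤ absPairing (fun i => ∑ k, q k i) (fun i => ∑ k, w k i) :=
        sum_absPairing_le_absPairing_sum hdq hw
    _ ≤ kotheDual N (fun i => ∑ k, q k i) * N (fun i => ∑ k, w k i) :=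
        absPairing_le_kotheDual_mul hzero hsmul _ (ne_top_of_le_ne_top ENNReal.ofReal_ne_top hNsum)
    _ ≤ kotheDual N (fun i => ∑ k, q k i) * ENNReal.ofReal γ := by gcongr
    _ = ENNReal.ofReal γ * kotheDual N (fun i => ∑ k, q k i) := mul_comm _ _

theorem kotheDual_sum_le_of_subfamily_le (hzero : ∀ x, N x = 0 → x = 0)
    (hsmul : ∀ (c : ℝ) (x : ℕ → ℝ), N (c • x) = ENNReal.ofReal |c| * N x)
    (hmono : ∀ x y : ℕ → ℝ, (∀ i, |x i| ≤ |y i|) → N x ≤ N y)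
    (hdp : Pairwise fun k l => Disjoint (support (p k)) (support (p l)))
    (hdq : Pairwise fun k l => Disjoint (support (q k)) (support (q l)))
    (hdom : ∀ a b : Fin n → ℕ → ℝ, (∀ k, support (a k) ⊆ support (p k)) →
      (∀ k, support (b k) ⊆ support (q k)) → (∀ k, N (b k) ≤ N (a k)) →
      N (fun i => ∑ k, b k i) ≤ ENNReal.ofReal γ * N (fun i => ∑ k, a k i))
    (hpq : ∀ k, kotheDual N (p k) ≤ kotheDual N (q k)) :
    kotheDual N (fun i => ∑ k, p k i) ≤ ENNReal.ofReal γ * kotheDual N (fun i => ∑ k, q k i) := by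
  refine iSup_le fun ⟨g, hg⟩ => ?_
  set a : Fin n → ℕ → ℝ := fun k => (support (p k)).indicator g
  have hNa : ∀ k, N (a k) ≠ ⊤ := fun k => ne_top_of_le_ne_top ENNReal.one_ne_top
    ((hmono _ _ fun i => norm_indicator_le_norm_self g i).trans hg)
  calc absPairing (fun i => ∑ k, p k i) g ≤ ∑ k, absPairing (p k) g := absPairing_sum_left_le p g
    _ = ∑ k, absPairing (p k) (a k) :=
        Finset.sum_congr rfl fun k _ => (absPairing_indicator_right subset_rfl g).symm
    _ ≤ ∑ k, kotheDual N (p k) * N (a k) :=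
        Finset.sum_le_sum fun k _ => absPairing_le_kotheDual_mul hzero hsmul _ (hNa k)
    _ ≤ ∑ k, N (a k) * kotheDual N (q k) :=
        Finset.sum_le_sum fun k _ => by rw [mul_comm]; gcongr; exact hpq k
    _ = ∑ k, ⨆ h : {h : ℕ → ℝ // N h ≤ 1}, N (a k) * absPairing (q k) h := by
        simp only [kotheDual_eq_iSup_absPairing, ENNReal.mul_iSup]
    _ ≤ ENNReal.ofReal γ * kotheDual N (fun i => ∑ k, q k i) :=
        ENNReal.finsetSum_iSup_le fun H =>
          sum_mul_absPairing_le hzero hsmul hmono hdp hdq hdom hg fun k => (H k).2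

end KotheDual

section Bidual

variable {N : (ℕ → ℝ) → ℝ≥0∞}

theorem kotheDual_kotheDual_le (hzero : ∀ x, N x = 0 → x = 0)
    (hsmul : ∀ (c : ℝ) (x : ℕ → ℝ), N (c • x) = ENNReal.ofReal |c| * N x)
    {x : ℕ → ℝ} (hx : N x ≠ ⊤) : kotheDual (kotheDual N) x ≤ N x :=
  iSup_le fun ⟨f, hf⟩ => calc
    absPairing x f = absPairing f x := absPairing_comm x f
    _ ≤ kotheDual N f * N x := absPairing_le_kotheDual_mul hzero hsmul f hx
    _ ≤ 1 * N x := by gcongr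
    _ = N x := one_mul _

theorem linearMap_apply_eq_sum (φ : (ℕ → ℝ) →ₗ[ℝ] ℝ) {y : ℕ → ℝ} {t : Finset ℕ}
    (hy : support y ⊆ t) : φ y = ∑ i ∈ t, y i * φ (Pi.single i 1) := by
  have hsum : y = ∑ i ∈ t, y i • Pi.single i (1 : ℝ) := by
    ext j
    by_cases hj : j ∈ t
    · simp [Finset.sum_apply, Pi.single_apply, hj]
    · simp [Finset.sum_apply, Pi.single_apply, hj, notMem_support.1 fun h => hj (hy h)]
  conv_lhs => rw [hsum]
  simp [map_sum]

theorem exists_linearMap_eq_toReal_le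
    (hsmul : ∀ (c : ℝ) (x : ℕ → ℝ), N (c • x) = ENNReal.ofReal |c| * N x)
    (hadd : ∀ x y : ℕ → ℝ, N (x + y) ≤ N x + N y)
    (hfin : ∀ x : ℕ → ℝ, (support x).Finite → N x < ⊤)
    {x : ℕ → ℝ} {t : Finset ℕ} (hx : support x ⊆ t) :
    ∃ φ : (ℕ → ℝ) →ₗ[ℝ] ℝ, φ x = (N x).toReal ∧ ∀ y, support y ⊆ t → φ y ≤ (N y).toReal := by
  set P : (ℕ → ℝ) → ℝ := fun y => (N ((t : Set ℕ).indicator y)).toReal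
  have hPfin : ∀ y, N ((t : Set ℕ).indicator y) ≠ ⊤ := fun y =>
    (hfin _ (t.finite_toSet.subset Set.support_indicator_subset)).ne
  have hP : ∀ y, support y ⊆ t → P y = (N y).toReal := fun y hy => by
    simp only [P, Set.indicator_eq_self.2 hy]
  have hPsmul : ∀ c : ℝ, 0 < c → ∀ y, P (c • y) = c * P y := fun c hc y => by
    have hind : (t : Set ℕ).indicator (c • y) = c • (t : Set ℕ).indicator y :=
      Set.indicator_const_smul _ c y
    simp only [P]
    rw [hind, hsmul, ENNReal.toReal_mul, ENNReal.toReal_ofReal (abs_nonneg c), abs_of_pos hc]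
  have hPadd : ∀ y z, P (y + z) ≤ P y + P z := fun y z => by
    simp only [P, Pi.add_def, Set.indicator_add]
    exact (ENNReal.toReal_mono (by simp [hPfin]) (hadd _ _)).trans ENNReal.toReal_add_le
  rcases eq_or_ne x 0 with rfl | hx0
  · refine ⟨0, ?_, fun y _ => ENNReal.toReal_nonneg⟩
    simpa using (congrArg ENNReal.toReal (hsmul 0 0)).symm
  obtain ⟨φ, hφ, hφP⟩ := exists_extension_of_le_sublinear
    (LinearPMap.mkSpanSingleton x (N x).toReal hx0) P hPsmul hPadd <| by
      rintro ⟨z, hz⟩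
      obtain ⟨c, rfl⟩ := Submodule.mem_span_singleton.1 hz
      rw [LinearPMap.mkSpanSingleton'_apply, hP _ ((support_const_smul_subset c x).trans hx),
        hsmul, ENNReal.toReal_mul, ENNReal.toReal_ofReal (abs_nonneg c), RingHom.id_apply,
        smul_eq_mul]
      exact mul_le_mul_of_nonneg_right (le_abs_self c) ENNReal.toReal_nonneg
  exact ⟨φ, (hφ ⟨x, Submodule.mem_span_singleton_self x⟩).trans
    (LinearPMap.mkSpanSingleton_apply ℝ ℝ hx0 _), fun y hy => (hφP y).trans_eq (hP y hy)⟩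

theorem le_kotheDual_kotheDual
    (hsmul : ∀ (c : ℝ) (x : ℕ → ℝ), N (c • x) = ENNReal.ofReal |c| * N x)
    (hadd : ∀ x y : ℕ → ℝ, N (x + y) ≤ N x + N y)
    (hmono : ∀ x y : ℕ → ℝ, (∀ i, |x i| ≤ |y i|) → N x ≤ N y)
    (hfin : ∀ x : ℕ → ℝ, (support x).Finite → N x < ⊤)
    {x : ℕ → ℝ} (hx : (support x).Finite) : N x ≤ kotheDual (kotheDual N) x := by
  set t := hx.toFinset
  have hxt : support x ⊆ t := by simp [t]
  obtain ⟨φ, hφx, hφ⟩ := exists_linearMap_eq_toReal_le hsmul hadd hfin hxt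
  set f : ℕ → ℝ := (t : Set ℕ).indicator fun i => φ (Pi.single i 1)
  have hφf : ∀ y, support y ⊆ t → φ y = ∑ i ∈ t, y i * f i := fun y hy => by
    rw [linearMap_apply_eq_sum φ hy]
    exact Finset.sum_congr rfl fun i hi => by simp [f, hi]
  have hf : kotheDual N f ≤ 1 := iSup_le fun ⟨h, hh⟩ => by
    -- `y` is `|h|` with the signs of `f`, so that `φ y = ∑ |f i h i|`.
    set z : ℕ → ℝ := fun i => if 0 ≤ f i then |h i| else -|h i|
    set y : ℕ → ℝ := (t : Set ℕ).indicator z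
    have hyz : ∀ i ∈ t, y i = z i := fun i hi => Set.indicator_of_mem (Finset.mem_coe.2 hi) z
    have hyh : ∀ i, |y i| ≤ |h i| := fun i => by
      refine (norm_indicator_le_norm_self z i).trans_eq ?_
      simp only [z]
      split_ifs <;> simp
    have hφy : ∑ i ∈ t, |f i * h i| = φ y := by
      rw [hφf y Set.support_indicator_subset]
      refine Finset.sum_congr rfl fun i hi => ?_
      rw [hyz i hi, abs_mul]
      simp only [z]
      split_ifs with hfi
      · rw [abs_of_nonneg hfi, mul_comm]
      · rw [abs_of_neg (not_le.1 hfi)]; ring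
    calc absPairing f h = ENNReal.ofReal (φ y) := by
          rw [absPairing_eq_sum_of_support_subset Set.support_indicator_subset, hφy]
      _ ≤ ENNReal.ofReal (N y).toReal :=
          ENNReal.ofReal_le_ofReal (hφ y Set.support_indicator_subset)
      _ ≤ N h := ENNReal.ofReal_toReal_le.trans (hmono y h hyh)
      _ ≤ 1 := hh
  calc N x = ENNReal.ofReal (∑ i ∈ t, x i * f i) := by
        rw [← hφf x hxt, hφx, ENNReal.ofReal_toReal (hfin x hx).ne]
    _ ≤ ENNReal.ofReal (∑ i ∈ t, |x i * f i|) :=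
        ENNReal.ofReal_le_ofReal (Finset.sum_le_sum fun i _ => le_abs_self _)
    _ = absPairing x f := (absPairing_eq_sum_of_support_subset hxt f).symm
    _ ≤ kotheDual (kotheDual N) x := absPairing_le_kotheDual hf x

theorem kotheDual_kotheDual_of_finite (hzero : ∀ x, N x = 0 → x = 0)
    (hsmul : ∀ (c : ℝ) (x : ℕ → ℝ), N (c • x) = ENNReal.ofReal |c| * N x)
    (hadd : ∀ x y : ℕ → ℝ, N (x + y) ≤ N x + N y)
    (hmono : ∀ x y : ℕ → ℝ, (∀ i, |x i| ≤ |y i|) → N x ≤ N y)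
    (hfin : ∀ x : ℕ → ℝ, (support x).Finite → N x < ⊤)
    {x : ℕ → ℝ} (hx : (support x).Finite) : kotheDual (kotheDual N) x = N x :=
  le_antisymm (kotheDual_kotheDual_le hzero hsmul (hfin x hx).ne)
    (le_kotheDual_kotheDual hsmul hadd hmono hfin hx)

end Bidual

section Subfamily

variable {n : ℕ} {u v a b : Fin n → ℕ → ℝ}

theorem ENormLeftDominant.le_of_subfamily {N : (ℕ → ℝ) → ℝ≥0∞} {γ : ℝ}
    (hL : ENormLeftDominant N γ)
    (hu : ∀ k, (support (u k)).Finite) (hv : ∀ k, (support (v k)).Finite)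
    (hdu : Pairwise fun k l => Disjoint (support (u k)) (support (u l)))
    (hdv : Pairwise fun k l => Disjoint (support (v k)) (support (v l)))
    (huv : ∀ k, ∀ i ∈ support (u k), ∀ j ∈ support (v k), i < j)
    (ha : ∀ k, support (a k) ⊆ support (u k)) (hb : ∀ k, support (b k) ⊆ support (v k))
    (hab : ∀ k, N (b k) ≤ N (a k)) :
    N (fun i => ∑ k, b k i) ≤ ENNReal.ofReal γ * N (fun i => ∑ k, a k i) :=
  hL n a b (fun k => (hu k).subset (ha k)) (fun k => (hv k).subset (hb k))
    (fun k l hkl => (hdu hkl).mono (ha k) (ha l)) (fun k l hkl => (hdv hkl).mono (hb k) (hb l))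
    (fun k i hi j hj => huv k i (ha k hi) j (hb k hj)) hab

theorem ENormRightDominant.le_of_subfamily {N : (ℕ → ℝ) → ℝ≥0∞} {γ : ℝ}
    (hR : ENormRightDominant N γ)
    (hu : ∀ k, (support (u k)).Finite) (hv : ∀ k, (support (v k)).Finite)
    (hdu : Pairwise fun k l => Disjoint (support (u k)) (support (u l)))
    (hdv : Pairwise fun k l => Disjoint (support (v k)) (support (v l)))
    (huv : ∀ k, ∀ i ∈ support (u k), ∀ j ∈ support (v k), i < j)
    (ha : ∀ k, support (a k) ⊆ support (u k)) (hb : ∀ k, support (b k) ⊆ support (v k))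
    (hab : ∀ k, N (a k) ≤ N (b k)) :
    N (fun i => ∑ k, a k i) ≤ ENNReal.ofReal γ * N (fun i => ∑ k, b k i) :=
  hR n a b (fun k => (hu k).subset (ha k)) (fun k => (hv k).subset (hb k))
    (fun k l hkl => (hdu hkl).mono (ha k) (ha l)) (fun k l hkl => (hdv hkl).mono (hb k) (hb l))
    (fun k i hi j hj => huv k i (ha k hi) j (hb k hj)) hab

end Subfamily

theorem statement15_general (N : (ℕ → ℝ) → ℝ≥0∞)
    (hzero : ∀ x : ℕ → ℝ, N x = 0 ↔ x = 0)
    (hsmul : ∀ (c : ℝ) (x : ℕ → ℝ), N (c • x) = ENNReal.ofReal |c| * N x)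
    (hadd : ∀ x y : ℕ → ℝ, N (x + y) ≤ N x + N y)
    (hmono : ∀ x y : ℕ → ℝ, (∀ i, |x i| ≤ |y i|) → N x ≤ N y)
    (hone : ∀ j : ℕ, N (Pi.single j 1) = 1)
    (hfin : ∀ x : ℕ → ℝ, (Function.support x).Finite → N x < ⊤)
    (γ : ℝ) :
    ENormLeftDominant N γ ↔ ENormRightDominant (kotheDual N) γ := by
  have hzero' : ∀ x, N x = 0 → x = 0 := fun x => (hzero x).1
  have hbidual : ∀ x : ℕ → ℝ, (support x).Finite → kotheDual (kotheDual N) x = N x :=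
    fun _ => kotheDual_kotheDual_of_finite hzero' hsmul hadd hmono hfin
  have hsum_finite : ∀ {n : ℕ} (w : Fin n → ℕ → ℝ), (∀ k, (support (w k)).Finite) →
      (support fun i => ∑ k, w k i).Finite := fun w hw =>
    (Finset.univ.finite_toSet.biUnion fun k _ => hw k).subset (Finset.support_sum _ _)
  constructor
  · intro hL n u v hu hv hdu hdv huv hle
    exact kotheDual_sum_le_of_subfamily_le hzero' hsmul hmono hdu hdv
      (fun _ _ ha hb => hL.le_of_subfamily hu hv hdu hdv huv ha hb) hle
  · intro hR n u v hu hv hdu hdv huv hle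
    have h := kotheDual_sum_le_of_subfamily_le
      (fun _ => eq_zero_of_kotheDual_eq_zero fun j => (hone j).le) kotheDual_smul
      (fun _ _ => kotheDual_mono) hdv hdu
      (fun _ _ ha hb => hR.le_of_subfamily hu hv hdu hdv huv hb ha)
      (fun k => by rw [hbidual _ (hv k), hbidual _ (hu k)]; exact hle k)
    rwa [hbidual _ (hsum_finite v hv), hbidual _ (hsum_finite u hu)] at h

/-- Lemma 5.1. A sequence space `X` (given by its Köthe norm `N`, with
values in `[0,∞]`) is left-dominant with constant `γ` if and only if its Köthe dual `X*` is
right-dominant with constant `γ`. -/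
theorem statement15 (N : (ℕ → ℝ) → ℝ≥0∞)
    (hzero : ∀ x : ℕ → ℝ, N x = 0 ↔ x = 0)
    (hsmul : ∀ (c : ℝ) (x : ℕ → ℝ), N (c • x) = ENNReal.ofReal |c| * N x)
    (hadd : ∀ x y : ℕ → ℝ, N (x + y) ≤ N x + N y)
    (hmono : ∀ x y : ℕ → ℝ, (∀ i, |x i| ≤ |y i|) → N x ≤ N y)
    (hone : ∀ j : ℕ, N (Pi.single j 1) = 1)
    (hfin : ∀ x : ℕ → ℝ, (Function.support x).Finite → N x < ⊤)
    (γ : ℝ) (hγ : 1 ≤ γ) :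
    ENormLeftDominant N γ ↔ ENormRightDominant (kotheDual N) γ :=
  statement15_general N hzero hsmul hadd hmono hone hfin γ

end CK
end
end
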